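/- arXiv:2604.24097 — 2 statements merged into one kernel-verified Lean document; each statement's English description precedes it below -/
import Mathlib

section
/- Let p be an odd prime and let G = M(p,e,i) with generators a, b. A map θ defined on the generators by θ(a) = b^{m p^{e−i}} a^n and θ(b) = b^{1+r p^{e−i}} a^s, where 1 ≤ m, r ≤ p^i and 1 ≤ n, s ≤ p^e, extends to an automorphism of G if and only if p ∤ n; moreover, every automorphism of G arises this way. Consequently, |Aut(G)| = (p−1)·p^{2e+2i−1}. -/
open Subgroup Equiv
open scoped commutatorElement

namespace Beauville

variable {G : Type*} [Group G]

/-- `𝕋(G)`: generating triples with product 1. -/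
def TripleSet (G : Type*) [Group G] : Set (G × G × G) :=
  {t | Subgroup.closure {t.1, t.2.1} = ⊤ ∧ t.1 * t.2.1 * t.2.2 = 1}

lemma mem_tripleSet {x y z : G} :
    (x, y, z) ∈ TripleSet G ↔ Subgroup.closure {x, y} = ⊤ ∧ x * y * z = 1 := Iff.rfl

lemma closure_pair_top_of {x y u v : G} (h : Subgroup.closure {x, y} = ⊤)
    (hx : x ∈ Subgroup.closure {u, v}) (hy : y ∈ Subgroup.closure {u, v}) :
    Subgroup.closure ({u, v} : Set G) = ⊤ := by
  rw [eq_top_iff, ← h, Subgroup.closure_le]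
  intro g hg
  simp only [Set.mem_insert_iff, Set.mem_singleton_iff] at hg
  rcases hg with rfl | rfl
  · exact hx
  · exact hy

lemma mem_cp_left (u v : G) : u ∈ Subgroup.closure ({u, v} : Set G) :=
  Subgroup.subset_closure (Set.mem_insert _ _)

lemma mem_cp_right (u v : G) : v ∈ Subgroup.closure ({u, v} : Set G) :=
  Subgroup.subset_closure (Set.mem_insert_of_mem _ rfl)

lemma closure_pair_map_top (f : G ≃* G) {x y : G} (h : Subgroup.closure {x, y} = ⊤) :
    Subgroup.closure ({f x, f y} : Set G) = ⊤ := by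
  have himg : ({f x, f y} : Set G) = f.toMonoidHom '' {x, y} := (Set.image_pair _ _ _).symm
  rw [himg, ← MonoidHom.map_closure, h, ← MonoidHom.range_eq_map]
  simpa [MonoidHom.range_eq_top] using f.surjective

section Perms

/-- raw permutation `σ₁ : (x,y,z) ↦ (y,z,x)`. -/
def rotRaw : Equiv.Perm (G × G × G) where
  toFun t := (t.2.1, t.2.2, t.1)
  invFun t := (t.2.2, t.1, t.2.1)
  left_inv _ := rfl
  right_inv _ := rfl

@[simp] lemma rotRaw_apply (t : G × G × G) : rotRaw t = (t.2.1, t.2.2, t.1) := rfl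

lemma rotRaw_mem {t : G × G × G} (ht : t ∈ TripleSet G) : rotRaw t ∈ TripleSet G := by
  obtain ⟨x, y, z⟩ := t
  rw [mem_tripleSet] at ht
  obtain ⟨hc, hp⟩ := ht
  rw [rotRaw_apply]
  have hx : x = (y * z)⁻¹ := by
    rw [mul_assoc] at hp
    exact eq_inv_of_mul_eq_one_left hp
  refine mem_tripleSet.2 ⟨closure_pair_top_of hc ?_ ?_, ?_⟩
  · rw [hx]
    exact inv_mem (mul_mem (mem_cp_left _ _) (mem_cp_right _ _))
  · exact mem_cp_left _ _
  · rw [hx, mul_inv_cancel]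

lemma rotRaw_iff (t : G × G × G) : t ∈ TripleSet G ↔ rotRaw t ∈ TripleSet G :=
  ⟨fun h => rotRaw_mem h, fun h => by
    have h2 := rotRaw_mem (rotRaw_mem h)
    rwa [show rotRaw (rotRaw (rotRaw t)) = t by simp] at h2⟩

/-- `σ₁` as a permutation of `𝕋(G)`. -/
def sigma1T (G : Type*) [Group G] : Equiv.Perm (TripleSet G) :=
  rotRaw.subtypePerm fun t => (rotRaw_iff t).symm

/-- `σ₂ = σ₁ ∘ σ₁`, acting as `(x,y,z) ↦ (z,x,y)`. -/
def sigma2T (G : Type*) [Group G] : Equiv.Perm (TripleSet G) :=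
  sigma1T G * sigma1T G

/-- raw permutation `σ₃ : (x,y,z) ↦ (z,y,x^y)`. -/
def sigma3Raw : Equiv.Perm (G × G × G) where
  toFun t := (t.2.2, t.2.1, t.2.1⁻¹ * t.1 * t.2.1)
  invFun t := (t.2.1 * t.2.2 * t.2.1⁻¹, t.2.1, t.1)
  left_inv := by rintro ⟨x, y, z⟩; simp [mul_assoc]
  right_inv := by rintro ⟨x, y, z⟩; simp [mul_assoc]

@[simp] lemma sigma3Raw_apply (t : G × G × G) :
    sigma3Raw t = (t.2.2, t.2.1, t.2.1⁻¹ * t.1 * t.2.1) := rfl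

@[simp] lemma sigma3Raw_symm_apply (t : G × G × G) :
    sigma3Raw.symm t = (t.2.1 * t.2.2 * t.2.1⁻¹, t.2.1, t.1) := rfl

lemma sigma3Raw_mem {t : G × G × G} (ht : t ∈ TripleSet G) : sigma3Raw t ∈ TripleSet G := by
  obtain ⟨x, y, z⟩ := t
  rw [mem_tripleSet] at ht
  obtain ⟨hc, hp⟩ := ht
  have hz : z = (x * y)⁻¹ := eq_inv_of_mul_eq_one_right hp
  rw [sigma3Raw_apply]
  refine mem_tripleSet.2 ⟨closure_pair_top_of hc ?_ ?_, ?_⟩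
  · have hxe : x = z⁻¹ * y⁻¹ := by rw [hz]; group
    rw [hxe]
    exact mul_mem (inv_mem (mem_cp_left _ _)) (inv_mem (mem_cp_right _ _))
  · exact mem_cp_right _ _
  · rw [hz]; group

lemma sigma3Raw_symm_mem {t : G × G × G} (ht : t ∈ TripleSet G) :
    sigma3Raw.symm t ∈ TripleSet G := by
  obtain ⟨x, y, z⟩ := t
  rw [mem_tripleSet] at ht
  obtain ⟨hc, hp⟩ := ht
  have hz : z = (x * y)⁻¹ := eq_inv_of_mul_eq_one_right hp
  rw [sigma3Raw_symm_apply]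
  refine mem_tripleSet.2 ⟨closure_pair_top_of hc ?_ ?_, ?_⟩
  · have hxe : x = y⁻¹ * (y * z * y⁻¹)⁻¹ := by rw [hz]; group
    rw [hxe]
    exact mul_mem (inv_mem (mem_cp_right _ _)) (inv_mem (mem_cp_left _ _))
  · exact mem_cp_right _ _
  · rw [hz]; group

lemma sigma3Raw_iff (t : G × G × G) : t ∈ TripleSet G ↔ sigma3Raw t ∈ TripleSet G :=
  ⟨fun h => sigma3Raw_mem h, fun h => by
    have h2 := sigma3Raw_symm_mem h
    rwa [Equiv.symm_apply_apply] at h2⟩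

/-- `σ₃` as a permutation of `𝕋(G)`. -/
def sigma3T (G : Type*) [Group G] : Equiv.Perm (TripleSet G) :=
  sigma3Raw.subtypePerm fun t => (sigma3Raw_iff t).symm

/-- raw permutation `σ₄ : (x,y,z) ↦ (y,x,z^x)`. -/
def sigma4Raw : Equiv.Perm (G × G × G) where
  toFun t := (t.2.1, t.1, t.1⁻¹ * t.2.2 * t.1)
  invFun t := (t.2.1, t.1, t.2.1 * t.2.2 * t.2.1⁻¹)
  left_inv := by rintro ⟨x, y, z⟩; simp [mul_assoc]
  right_inv := by rintro ⟨x, y, z⟩; simp [mul_assoc]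

@[simp] lemma sigma4Raw_apply (t : G × G × G) :
    sigma4Raw t = (t.2.1, t.1, t.1⁻¹ * t.2.2 * t.1) := rfl

@[simp] lemma sigma4Raw_symm_apply (t : G × G × G) :
    sigma4Raw.symm t = (t.2.1, t.1, t.2.1 * t.2.2 * t.2.1⁻¹) := rfl

lemma sigma4Raw_mem {t : G × G × G} (ht : t ∈ TripleSet G) : sigma4Raw t ∈ TripleSet G := by
  obtain ⟨x, y, z⟩ := t
  rw [mem_tripleSet] at ht
  obtain ⟨hc, hp⟩ := ht
  have hz : z = (x * y)⁻¹ := eq_inv_of_mul_eq_one_right hp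
  rw [sigma4Raw_apply]
  refine mem_tripleSet.2 ⟨closure_pair_top_of hc ?_ ?_, ?_⟩
  · exact mem_cp_right _ _
  · exact mem_cp_left _ _
  · rw [hz]; group

lemma sigma4Raw_symm_mem {t : G × G × G} (ht : t ∈ TripleSet G) :
    sigma4Raw.symm t ∈ TripleSet G := by
  obtain ⟨x, y, z⟩ := t
  rw [mem_tripleSet] at ht
  obtain ⟨hc, hp⟩ := ht
  have hz : z = (x * y)⁻¹ := eq_inv_of_mul_eq_one_right hp
  rw [sigma4Raw_symm_apply]
  refine mem_tripleSet.2 ⟨closure_pair_top_of hc ?_ ?_, ?_⟩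
  · exact mem_cp_right _ _
  · exact mem_cp_left _ _
  · rw [hz]; group

lemma sigma4Raw_iff (t : G × G × G) : t ∈ TripleSet G ↔ sigma4Raw t ∈ TripleSet G :=
  ⟨fun h => sigma4Raw_mem h, fun h => by
    have h2 := sigma4Raw_symm_mem h
    rwa [Equiv.symm_apply_apply] at h2⟩

/-- `σ₄` as a permutation of `𝕋(G)`. -/
def sigma4T (G : Type*) [Group G] : Equiv.Perm (TripleSet G) :=
  sigma4Raw.subtypePerm fun t => (sigma4Raw_iff t).symm

/-- raw permutation `σ₅ : (x,y,z) ↦ (x,z,y^z)`. -/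
def sigma5Raw : Equiv.Perm (G × G × G) where
  toFun t := (t.1, t.2.2, t.2.2⁻¹ * t.2.1 * t.2.2)
  invFun t := (t.1, t.2.1 * t.2.2 * t.2.1⁻¹, t.2.1)
  left_inv := by rintro ⟨x, y, z⟩; simp [mul_assoc]
  right_inv := by rintro ⟨x, y, z⟩; simp [mul_assoc]

@[simp] lemma sigma5Raw_apply (t : G × G × G) :
    sigma5Raw t = (t.1, t.2.2, t.2.2⁻¹ * t.2.1 * t.2.2) := rfl

@[simp] lemma sigma5Raw_symm_apply (t : G × G × G) :
    sigma5Raw.symm t = (t.1, t.2.1 * t.2.2 * t.2.1⁻¹, t.2.1) := rfl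

lemma sigma5Raw_mem {t : G × G × G} (ht : t ∈ TripleSet G) : sigma5Raw t ∈ TripleSet G := by
  obtain ⟨x, y, z⟩ := t
  rw [mem_tripleSet] at ht
  obtain ⟨hc, hp⟩ := ht
  have hz : z = (x * y)⁻¹ := eq_inv_of_mul_eq_one_right hp
  rw [sigma5Raw_apply]
  refine mem_tripleSet.2 ⟨closure_pair_top_of hc ?_ ?_, ?_⟩
  · exact mem_cp_left _ _
  · have hye : y = x⁻¹ * z⁻¹ := by rw [hz]; group
    rw [hye]
    exact mul_mem (inv_mem (mem_cp_left _ _)) (inv_mem (mem_cp_right _ _))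
  · rw [hz]; group

lemma sigma5Raw_symm_mem {t : G × G × G} (ht : t ∈ TripleSet G) :
    sigma5Raw.symm t ∈ TripleSet G := by
  obtain ⟨x, y, z⟩ := t
  rw [mem_tripleSet] at ht
  obtain ⟨hc, hp⟩ := ht
  have hz : z = (x * y)⁻¹ := eq_inv_of_mul_eq_one_right hp
  rw [sigma5Raw_symm_apply]
  refine mem_tripleSet.2 ⟨closure_pair_top_of hc ?_ ?_, ?_⟩
  · exact mem_cp_left _ _
  · have hv : y * z * y⁻¹ = x⁻¹ * y⁻¹ := by rw [hz]; group
    rw [hv]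
    have h2 : (x * (x⁻¹ * y⁻¹))⁻¹ ∈ Subgroup.closure ({x, x⁻¹ * y⁻¹} : Set G) :=
      inv_mem (mul_mem (mem_cp_left _ _) (mem_cp_right _ _))
    simpa using h2
  · rw [hz]; group

lemma sigma5Raw_iff (t : G × G × G) : t ∈ TripleSet G ↔ sigma5Raw t ∈ TripleSet G :=
  ⟨fun h => sigma5Raw_mem h, fun h => by
    have h2 := sigma5Raw_symm_mem h
    rwa [Equiv.symm_apply_apply] at h2⟩

/-- `σ₅` as a permutation of `𝕋(G)`. -/
def sigma5T (G : Type*) [Group G] : Equiv.Perm (TripleSet G) :=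
  sigma5Raw.subtypePerm fun t => (sigma5Raw_iff t).symm

end Perms


/-- Evaluation of a word in two letters at a pair of group elements. -/
def wordEval (w : FreeGroup Bool) (x y : G) : G :=
  FreeGroup.lift (fun b => bif b then x else y) w

lemma wordEval_conj (w : FreeGroup Bool) (x y c : G) :
    wordEval w (c⁻¹ * x * c) (c⁻¹ * y * c) = c⁻¹ * wordEval w x y * c := by
  have key : FreeGroup.lift (fun b => bif b then c⁻¹ * x * c else c⁻¹ * y * c) =
      ((MulAut.conj c⁻¹).toMonoidHom.comp (FreeGroup.lift (fun b => bif b then x else y))) := by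
    apply FreeGroup.ext_hom
    intro b
    cases b <;> simp [MulAut.conj_apply, mul_assoc]
  unfold wordEval
  rw [key]
  simp [MulAut.conj_apply, mul_assoc]

/-- Conjugation of a triple by a group element (`t^c`). -/
def conjTriple (c : G) (t : G × G × G) : G × G × G :=
  (c⁻¹ * t.1 * c, c⁻¹ * t.2.1 * c, c⁻¹ * t.2.2 * c)

lemma conjTriple_conjTriple (c d : G) (t : G × G × G) :
    conjTriple d (conjTriple c t) = conjTriple (c * d) t := by
  simp [conjTriple, mul_assoc]

@[simp] lemma conjTriple_one (t : G × G × G) : conjTriple 1 t = t := by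
  simp [conjTriple]

lemma conjTriple_mem (c : G) {t : G × G × G} (ht : t ∈ TripleSet G) :
    conjTriple c t ∈ TripleSet G := by
  obtain ⟨x, y, z⟩ := t
  rw [mem_tripleSet] at ht
  obtain ⟨hc, hp⟩ := ht
  refine mem_tripleSet.2 ⟨?_, ?_⟩
  · have h1 : (c⁻¹ * x * c : G) = (MulAut.conj c⁻¹ : G ≃* G) x := by
      simp [MulAut.conj_apply]
    have h2 : (c⁻¹ * y * c : G) = (MulAut.conj c⁻¹ : G ≃* G) y := by
      simp [MulAut.conj_apply]
    rw [h1, h2]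
    exact closure_pair_map_top _ hc
  · have : c⁻¹ * x * c * (c⁻¹ * y * c) * (c⁻¹ * z * c) = c⁻¹ * (x * y * z) * c := by group
    rw [this, hp]
    group

/-- The raw permutation `β_w : t ↦ t^{w(x,y)}`. -/
def betaRaw (w : FreeGroup Bool) : Equiv.Perm (G × G × G) where
  toFun t := conjTriple (wordEval w t.1 t.2.1) t
  invFun t := conjTriple (wordEval w t.1 t.2.1)⁻¹ t
  left_inv := by
    rintro ⟨x, y, z⟩
    have h1 : wordEval w (conjTriple (wordEval w x y) (x, y, z)).1
        (conjTriple (wordEval w x y) (x, y, z)).2.1 = wordEval w x y := by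
      show wordEval w ((wordEval w x y)⁻¹ * x * wordEval w x y)
          ((wordEval w x y)⁻¹ * y * wordEval w x y) = _
      rw [wordEval_conj]
      group
    show conjTriple _ (conjTriple (wordEval w x y) (x, y, z)) = (x, y, z)
    rw [h1, conjTriple_conjTriple, mul_inv_cancel, conjTriple_one]
  right_inv := by
    rintro ⟨x, y, z⟩
    have h1 : wordEval w (conjTriple (wordEval w x y)⁻¹ (x, y, z)).1
        (conjTriple (wordEval w x y)⁻¹ (x, y, z)).2.1 = wordEval w x y := by
      show wordEval w ((wordEval w x y)⁻¹⁻¹ * x * (wordEval w x y)⁻¹)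
          ((wordEval w x y)⁻¹⁻¹ * y * (wordEval w x y)⁻¹) = _
      rw [wordEval_conj]
      group
    show conjTriple _ (conjTriple (wordEval w x y)⁻¹ (x, y, z)) = (x, y, z)
    rw [h1, conjTriple_conjTriple, inv_mul_cancel, conjTriple_one]

lemma betaRaw_iff (w : FreeGroup Bool) (t : G × G × G) :
    t ∈ TripleSet G ↔ betaRaw w t ∈ TripleSet G := by
  constructor
  · intro h
    exact conjTriple_mem _ h
  · intro h
    have h2 : (betaRaw w).symm (betaRaw w t) ∈ TripleSet G := conjTriple_mem _ h
    rwa [Equiv.symm_apply_apply] at h2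

/-- `β_w` as a permutation of `𝕋(G)`. -/
def betaT (G : Type*) [Group G] (w : FreeGroup Bool) : Equiv.Perm (TripleSet G) :=
  (betaRaw w).subtypePerm fun t => (betaRaw_iff w t).symm

/-- The raw diagonal action of an automorphism on triples. -/
def autRaw (α : MulAut G) : Equiv.Perm (G × G × G) :=
  Equiv.prodCongr (α : G ≃* G).toEquiv
    (Equiv.prodCongr (α : G ≃* G).toEquiv (α : G ≃* G).toEquiv)

@[simp] lemma autRaw_apply (α : MulAut G) (t : G × G × G) :
    autRaw α t = (α t.1, α t.2.1, α t.2.2) := rfl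

lemma autRaw_mem (α : MulAut G) {t : G × G × G} (ht : t ∈ TripleSet G) :
    autRaw α t ∈ TripleSet G := by
  obtain ⟨x, y, z⟩ := t
  rw [mem_tripleSet] at ht
  obtain ⟨hc, hp⟩ := ht
  rw [autRaw_apply]
  refine mem_tripleSet.2 ⟨closure_pair_map_top (α : G ≃* G) hc, ?_⟩
  rw [← map_mul, ← map_mul, hp, map_one]

lemma autRaw_symm_apply (α : MulAut G) (t : G × G × G) :
    (autRaw α).symm t = autRaw α⁻¹ t := rfl

lemma autRaw_iff (α : MulAut G) (t : G × G × G) :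
    t ∈ TripleSet G ↔ autRaw α t ∈ TripleSet G := by
  constructor
  · exact fun h => autRaw_mem α h
  · intro h
    have h2 := autRaw_mem α⁻¹ h
    rw [← autRaw_symm_apply, Equiv.symm_apply_apply] at h2
    exact h2

/-- `α̃`, the diagonal action of an automorphism on `𝕋(G)`. -/
def dAutT (α : MulAut G) : Equiv.Perm (TripleSet G) :=
  (autRaw α).subtypePerm fun t => (autRaw_iff α t).symm

/-- `ι̃_g`, the diagonal action of the inner automorphism `ι_g` on `𝕋(G)`. -/
def dInnT (g : G) : Equiv.Perm (TripleSet G) :=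
  dAutT (MulAut.conj g)

/-- `J(G) = {β_w : w a word in two letters}`. -/
def JSet (G : Type*) [Group G] : Set (Equiv.Perm (TripleSet G)) :=
  Set.range (betaT G)

/-- The subgroup `⟨σ₁, σ₄⟩` of `Sym(𝕋(G))`. -/
def SS14 (G : Type*) [Group G] : Subgroup (Equiv.Perm (TripleSet G)) :=
  Subgroup.closure {sigma1T G, sigma4T G}

/-- `I(G) = ⟨DInn(G), σ₁, σ₂, σ₃, σ₄, σ₅⟩`. -/
def IGroup (G : Type*) [Group G] : Subgroup (Equiv.Perm (TripleSet G)) :=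
  Subgroup.closure (Set.range (dInnT (G := G)) ∪
    {sigma1T G, sigma2T G, sigma3T G, sigma4T G, sigma5T G})


/-- `Σ(x,y)`: the union of all conjugates of `⟨x⟩`, `⟨y⟩` and `⟨x*y⟩`. -/
def sigmaSet (x y : G) : Set G :=
  ⋃ g : G, (fun h => g * h * g⁻¹) ''
    ((Subgroup.zpowers x : Set G) ∪ (Subgroup.zpowers y : Set G) ∪
      (Subgroup.zpowers (x * y) : Set G))

/-- An (unmixed) Beauville structure for `G`. -/
def IsBeauvilleStructure (t : (G × G × G) × (G × G × G)) : Prop :=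
  ∃ x₁ y₁ x₂ y₂ : G,
    t = ((x₁, y₁, (x₁ * y₁)⁻¹), (x₂, y₂, (x₂ * y₂)⁻¹)) ∧
    Subgroup.closure {x₁, y₁} = ⊤ ∧ Subgroup.closure {x₂, y₂} = ⊤ ∧
    sigmaSet x₁ y₁ ∩ sigmaSet x₂ y₂ = {1}

/-- `𝕌(G)`, the set of all Beauville structures for `G`, as a subset of `G³ × G³`. -/
def beauvilleStructures (G : Type*) [Group G] : Set ((G × G × G) × (G × G × G)) :=
  {t | IsBeauvilleStructure t}

/-- A Beauville group is a group admitting a Beauville structure. -/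
def IsBeauvilleGroup (G : Type*) [Group G] : Prop :=
  ∃ t : (G × G × G) × (G × G × G), IsBeauvilleStructure t

/-- A metacyclic group: it has a cyclic normal subgroup with cyclic quotient. -/
def IsMetacyclic (G : Type*) [Group G] : Prop :=
  ∃ (N : Subgroup G) (hN : N.Normal), IsCyclic N ∧
    (haveI := hN; IsCyclic (G ⧸ N))

/-- `𝕌(G)` viewed as a subset of `𝕋(G) × 𝕋(G)`. -/
def USet (G : Type*) [Group G] : Set (TripleSet G × TripleSet G) :=
  {t | IsBeauvilleStructure ((t.1 : G × G × G), (t.2 : G × G × G))}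

/-- Generators of `B(G)`: the permutations of `𝕌(G)` induced by the componentwise action
of `I(G) × I(G)` and by the diagonal action of `Aut(G)`. -/
def BGens (G : Type*) [Group G] : Set (Equiv.Perm (USet G)) :=
  {π | ∃ ρ₁ ∈ IGroup G, ∃ ρ₂ ∈ IGroup G,
      ∀ t : USet G, ((π t : TripleSet G × TripleSet G)) = (ρ₁ (t : TripleSet G × TripleSet G).1, ρ₂ (t : TripleSet G × TripleSet G).2)} ∪
  {π | ∃ α : MulAut G,
      ∀ t : USet G, ((π t : TripleSet G × TripleSet G)) = (dAutT α (t : TripleSet G × TripleSet G).1, dAutT α (t : TripleSet G × TripleSet G).2)}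

/-- The permutation(s) of `𝕌(G)` exchanging the two triples. -/
def tauGens (G : Type*) [Group G] : Set (Equiv.Perm (USet G)) :=
  {π | ∀ t : USet G, ((π t : TripleSet G × TripleSet G)) =
      ((t : TripleSet G × TripleSet G).2, (t : TripleSet G × TripleSet G).1)}

/-- `B(G)`, the subgroup of `Sym(𝕌(G))` generated by the action of `I(G) × I(G)`
and the diagonal action of `Aut(G)`. -/
def BGroup (G : Type*) [Group G] : Subgroup (Equiv.Perm (USet G)) :=
  Subgroup.closure (BGens G)

/-- `A_𝕌(G) = ⟨B(G), τ⟩`. -/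
def AUGroup (G : Type*) [Group G] : Subgroup (Equiv.Perm (USet G)) :=
  Subgroup.closure (BGens G ∪ tauGens G)


/-- The subgroup of `G` generated by all `n`-th powers. -/
def powSubgroup (G : Type*) [Group G] (n : ℕ) : Subgroup G :=
  Subgroup.closure (Set.range fun g : G => g ^ n)

/-- The subgroup of inner automorphisms, `Inn(G)`. -/
def innAut (G : Type*) [Group G] : Subgroup (MulAut G) :=
  (MulAut.conj : G →* MulAut G).range

instance innAut_normal (G : Type*) [Group G] : (innAut G).Normal := by
  constructor
  rintro - ⟨g, rfl⟩ α
  refine ⟨α g, ?_⟩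
  ext x
  simp only [MulAut.conj_apply, MulAut.mul_apply, MulAut.inv_def, map_mul, map_inv,
    MulEquiv.apply_symm_apply]

section Presented

/-- The two generators of the free group on two letters. -/
def fA : FreeGroup Bool := FreeGroup.of true

def fB : FreeGroup Bool := FreeGroup.of false

/-- Relations of `M(p,e,i) = ⟨a,b ∣ a^{p^e} = b^{p^e} = 1, [a,b] = a^{p^i}⟩`. -/
def MRels (p e i : ℕ) : Set (FreeGroup Bool) :=
  {fA ^ p ^ e, fB ^ p ^ e, ⁅fA, fB⁆ * (fA ^ p ^ i)⁻¹}

/-- The metacyclic group `M(p,e,i)`. -/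
abbrev MGroup (p e i : ℕ) : Type := PresentedGroup (MRels p e i)

def ma (p e i : ℕ) : MGroup p e i := PresentedGroup.of true

def mb (p e i : ℕ) : MGroup p e i := PresentedGroup.of false

/-- Relations of
`H(p,e,i,j,k) = ⟨a,b ∣ a^{p^e} = [b,a]^{p^j} = [b,a,a] = [b,a,b] = 1, b^{p^i} = [b,a]^{p^k}⟩`. -/
def HRels (p e i j k : ℕ) : Set (FreeGroup Bool) :=
  {fA ^ p ^ e, ⁅fB, fA⁆ ^ p ^ j, ⁅⁅fB, fA⁆, fA⁆, ⁅⁅fB, fA⁆, fB⁆,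
    fB ^ p ^ i * (⁅fB, fA⁆ ^ p ^ k)⁻¹}

/-- The group `H(p,e,i,j,k)` of nilpotency class 2. -/
abbrev HGroup (p e i j k : ℕ) : Type := PresentedGroup (HRels p e i j k)

def ha (p e i j k : ℕ) : HGroup p e i j k := PresentedGroup.of true

def hb (p e i j k : ℕ) : HGroup p e i j k := PresentedGroup.of false

/-- Relations of
`K(p,e,j) = ⟨a,b ∣ a^{p^e} = b^{p^e} = [b,a]^{p^j} = [b,a,b] = [b,a,a] = 1⟩`. -/
def KRels (p e j : ℕ) : Set (FreeGroup Bool) :=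
  {fA ^ p ^ e, fB ^ p ^ e, ⁅fB, fA⁆ ^ p ^ j, ⁅⁅fB, fA⁆, fB⁆, ⁅⁅fB, fA⁆, fA⁆}

/-- The group `K(p,e,j)` of nilpotency class 2. -/
abbrev KGroup (p e j : ℕ) : Type := PresentedGroup (KRels p e j)

def ka (p e j : ℕ) : KGroup p e j := PresentedGroup.of true

def kb (p e j : ℕ) : KGroup p e j := PresentedGroup.of false

end Presented


/-!
In the normal form `a ^ x * b ^ y` (`x y : ZMod (p ^ e)`), conjugation by `b` multiplies the
exponent of `a` by `c = 1 - p ^ i`, and since `p` is odd `c` has order exactly `p ^ (e - i)`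
in `ZMod (p ^ e)`. So `M(p,e,i)` is the twisted product `ZMod (p ^ e) ⋊ ZMod (p ^ e)` in which
`y` acts by `c ^ y`. An automorphism is the same thing as a generating pair `(A, B)` satisfying
the defining relations. In coordinates, the relation `[A, B] = A ^ p ^ i` forces the `b`-exponent
of `A` to be divisible by `p ^ (e - i)`; generation, read off in the Frattini quotient
`(ZMod p)²` (which is not cyclic), then forces the `a`-exponent of `A` to be a unit, and the
relation becomes `c ^ (b-exponent of B) = c`. Conversely these conditions give the relations and
generation, the `a`-exponent of `B` being free. Counting gives `p ^ i · φ(p ^ e) · p ^ i · p ^ e`.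
-/

lemma exists_nsmul_eq_of_isUnit {n : ℕ} [NeZero n] {u : ZMod n} (hu : IsUnit u) (x : ZMod n) :
    ∃ k : ℕ, k • u = x := by
  obtain ⟨u, rfl⟩ := hu
  exact ⟨(x * ↑u⁻¹).val, by simp [nsmul_eq_mul, mul_assoc]⟩

lemma exists_mem_Icc_natCast_eq {n : ℕ} [NeZero n] (z : ZMod n) :
    ∃ k, 1 ≤ k ∧ k ≤ n ∧ (k : ZMod n) = z := by
  by_cases hz : z = 0
  · exact ⟨n, Nat.one_le_iff_ne_zero.2 (NeZero.ne n), le_rfl, by simp [hz]⟩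
  · exact ⟨z.val, Nat.one_le_iff_ne_zero.2 ((ZMod.val_ne_zero z).2 hz), (ZMod.val_lt z).le,
      ZMod.natCast_zmod_val z⟩

lemma castHom_eq_zero_iff_dvd_val {m n : ℕ} [NeZero n] (h : m ∣ n) (y : ZMod n) :
    ZMod.castHom h (ZMod m) y = 0 ↔ m ∣ y.val := by
  rw [ZMod.castHom_apply, ZMod.cast_eq_val, ZMod.natCast_eq_zero_iff]

lemma exists_mem_Icc_eq_natCast_add_mul {m n : ℕ} [NeZero n] (h : m ∣ n) {y : ZMod n} {j : ℕ}
    (hy : ZMod.castHom h (ZMod m) y = j) :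
    ∃ k, 1 ≤ k ∧ k ≤ n / m ∧ y = ((j + k * m : ℕ) : ZMod n) := by
  obtain ⟨k₀, hk₀⟩ : m ∣ (y - j).val :=
    (castHom_eq_zero_iff_dvd_val h _).1 (by rw [map_sub, hy, map_natCast, sub_self])
  have hm : 0 < m := Nat.pos_of_dvd_of_pos h (Nat.pos_of_ne_zero (NeZero.ne n))
  have : NeZero (n / m) :=
    ⟨(Nat.div_pos (Nat.le_of_dvd (Nat.pos_of_ne_zero (NeZero.ne n)) h) hm).ne'⟩
  obtain ⟨k, hk1, hkn, hk⟩ := exists_mem_Icc_natCast_eq (k₀ : ZMod (n / m))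
  refine ⟨k, hk1, hkn, ?_⟩
  have hmod : k * m ≡ k₀ * m [MOD n] := by
    simpa [Nat.div_mul_cancel h] using ((ZMod.natCast_eq_natCast_iff _ _ _).1 hk).mul_right' m
  rw [Nat.cast_add, (ZMod.natCast_eq_natCast_iff _ _ _).2 hmod, mul_comm k₀, ← hk₀,
    ZMod.natCast_zmod_val, add_sub_cancel]

lemma card_castHom_fiber {m n : ℕ} [NeZero n] (h : m ∣ n) (z : ZMod m) :
    Nat.card {y : ZMod n // ZMod.castHom h (ZMod m) y = z} = n / m := by
  let f := (ZMod.castHom h (ZMod m)).toAddMonoidHom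
  obtain ⟨y₀, hy₀⟩ := ZMod.castHom_surjective h z
  have hfib : {y : ZMod n // ZMod.castHom h (ZMod m) y = z} ≃ f.ker :=
    (Equiv.subRight y₀).subtypeEquiv fun y => by
      rw [Equiv.subRight_apply, AddMonoidHom.mem_ker, map_sub, sub_eq_zero]
      exact ⟨fun h => h.trans hy₀.symm, fun h => h.trans hy₀⟩
  have hm : 0 < m := Nat.pos_of_dvd_of_pos h (Nat.pos_of_ne_zero (NeZero.ne n))
  have hrange : Nat.card f.range = m := by
    rw [AddMonoidHom.range_eq_top.2 (ZMod.castHom_surjective h), AddSubgroup.card_top,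
      Nat.card_zmod]
  have := f.ker.card_mul_index
  rw [AddSubgroup.index_ker, hrange, Nat.card_zmod] at this
  rw [Nat.card_congr hfib, Nat.div_eq_of_eq_mul_left hm this.symm]

lemma pow_val_eq_zpow {n : ℕ} [NeZero n] {g : G} (hg : g ^ n = 1) {x : ZMod n} {z : ℤ}
    (hz : (z : ZMod n) = x) : g ^ x.val = g ^ z := by
  rw [← hz, ← zpow_natCast, ZMod.val_intCast, ← zpow_eq_zpow_emod' z hg]

lemma closure_pair_eq_top_of_surjective {H : Type*} [Group H] {f : G →* H}
    (hf : Function.Surjective f) {a b : G} (h : closure {a, b} = ⊤) :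
    closure {f a, f b} = ⊤ := by
  rw [← Set.image_pair, ← MonoidHom.map_closure, h, ← MonoidHom.range_eq_map,
    MonoidHom.range_eq_top.2 hf]

lemma isCyclic_of_closure_pair_eq_top {H : Type*} [Group H] {f : G →* H}
    (hf : Function.Surjective f) {a b : G} (h : closure {a, b} = ⊤) (ha : f a = 1) :
    IsCyclic H := by
  have := closure_pair_eq_top_of_surjective hf h
  rw [ha, closure_insert_one, ← zpowers_eq_closure] at this
  exact isCyclic_iff_exists_zpowers_eq_top.2 ⟨f b, this⟩

lemma range_cond_bool {α : Type*} (a b : α) :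
    Set.range (fun x : Bool => bif x then a else b) = {a, b} := by
  ext; simp [or_comm]

lemma lift_hom_of_eq_one {α H : Type*} [Group H] {rels : Set (FreeGroup α)}
    (f : PresentedGroup rels →* H) {r : FreeGroup α} (hr : r ∈ rels) :
    FreeGroup.lift (fun x => f (PresentedGroup.of x)) r = 1 := by
  have : FreeGroup.lift (fun x => f (PresentedGroup.of x)) = f.comp (PresentedGroup.mk rels) :=
    FreeGroup.ext_hom _ _ fun _ => by simp [PresentedGroup.of]
  rw [this, MonoidHom.comp_apply, PresentedGroup.one_of_mem hr, map_one]

lemma exists_mulEquiv_of_closure_range_eq_top {α H : Type*} [Group H] [Finite H]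
    {rels : Set (FreeGroup α)} (e : PresentedGroup rels ≃* H) {f : α → H}
    (hrels : ∀ r ∈ rels, FreeGroup.lift f r = 1) (hgen : closure (Set.range f) = ⊤) :
    ∃ φ : PresentedGroup rels ≃* H, ∀ x, φ (.of x) = f x := by
  have : Finite (PresentedGroup rels) := Finite.of_equiv _ e.symm.toEquiv
  have hsurj : Function.Surjective (PresentedGroup.toGroup hrels) := by
    rw [← MonoidHom.range_eq_top, eq_top_iff, ← hgen, closure_le]
    rintro _ ⟨x, rfl⟩
    exact ⟨_, PresentedGroup.toGroup.of hrels⟩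
  exact ⟨MulEquiv.ofBijective _ (hsurj.bijective_of_nat_card_le (Nat.card_congr e.toEquiv).le),
    fun _ => PresentedGroup.toGroup.of hrels⟩

lemma forall_lift_eq_one_MRels_iff {p e i : ℕ} {H : Type*} [Group H] (f : Bool → H) :
    (∀ r ∈ MRels p e i, FreeGroup.lift f r = 1) ↔
      f true ^ p ^ e = 1 ∧ f false ^ p ^ e = 1 ∧ ⁅f true, f false⁆ = f true ^ p ^ i := by
  simp [MRels, fA, fB, mul_inv_eq_one]

open Finset

/-- `⟨x, y⟩` stands for `a ^ x * b ^ y`, where `b ^ y` acts on the normal subgroup `{a ^ x}` by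
`x ↦ ψ y * x`. -/
@[ext]
structure TwistedProd {A R : Type*} [AddCommGroup A] [CommRing R] (ψ : AddChar A R) where
  x : R
  y : A

namespace TwistedProd

variable {A R : Type*} [AddCommGroup A] [CommRing R] {ψ : AddChar A R}

instance : Mul (TwistedProd ψ) := ⟨fun v w => ⟨v.x + ψ v.y * w.x, v.y + w.y⟩⟩
instance : One (TwistedProd ψ) := ⟨⟨0, 0⟩⟩
instance : Inv (TwistedProd ψ) := ⟨fun v => ⟨-(ψ (-v.y) * v.x), -v.y⟩⟩

@[simp] lemma mul_x (v w : TwistedProd ψ) : (v * w).x = v.x + ψ v.y * w.x := rfl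
@[simp] lemma mul_y (v w : TwistedProd ψ) : (v * w).y = v.y + w.y := rfl
@[simp] lemma one_x : (1 : TwistedProd ψ).x = 0 := rfl
@[simp] lemma one_y : (1 : TwistedProd ψ).y = 0 := rfl
@[simp] lemma inv_x (v : TwistedProd ψ) : v⁻¹.x = -(ψ (-v.y) * v.x) := rfl
@[simp] lemma inv_y (v : TwistedProd ψ) : v⁻¹.y = -v.y := rfl

instance : Group (TwistedProd ψ) :=
  Group.ofLeftAxioms
    (fun u v w => by
      ext
      · simp only [mul_x, mul_y, AddChar.map_add_eq_mul]; ring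
      · exact add_assoc _ _ _)
    (fun v => by ext <;> simp)
    (fun v => by ext <;> simp)

instance [Finite A] [Finite R] : Finite (TwistedProd ψ) :=
  Finite.of_injective (fun v => (v.x, v.y)) fun v w h => by
    ext
    exacts [congrArg Prod.fst h, congrArg Prod.snd h]

lemma twist_neg_mul (y : A) : ψ (-y) * ψ y = 1 := by
  rw [← AddChar.map_add_eq_mul, neg_add_cancel, AddChar.map_zero_eq_one]

lemma pow_eq (v : TwistedProd ψ) (k : ℕ) :
    v ^ k = ⟨v.x * ∑ j ∈ range k, ψ v.y ^ j, k • v.y⟩ := by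
  induction k with
  | zero => ext <;> simp
  | succ k ih =>
    rw [pow_succ, ih]
    ext
    · simp only [mul_x, AddChar.map_nsmul_eq_pow, sum_range_succ]; ring
    · simp [succ_nsmul]

lemma pow_eq_of_twist_eq_one {v : TwistedProd ψ} (h : ψ v.y = 1) (k : ℕ) :
    v ^ k = ⟨k • v.x, k • v.y⟩ := by
  simp [pow_eq, h, nsmul_eq_mul, mul_comm]

lemma inl_pow (a : R) (k : ℕ) : (⟨a, 0⟩ : TwistedProd ψ) ^ k = ⟨k • a, 0⟩ := by
  simp [pow_eq_of_twist_eq_one]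

lemma inr_pow (b : A) (k : ℕ) : (⟨0, b⟩ : TwistedProd ψ) ^ k = ⟨0, k • b⟩ := by
  simp [pow_eq]

lemma commutator_eq (v w : TwistedProd ψ) :
    ⁅v, w⁆ = ⟨v.x * (1 - ψ w.y) + (ψ v.y - 1) * w.x, 0⟩ := by
  have hv := twist_neg_mul (ψ := ψ) v.y
  have hw := twist_neg_mul (ψ := ψ) w.y
  ext
  · simp only [commutatorElement_def, mul_x, mul_y, inv_x, inv_y, add_neg_cancel_comm,
      AddChar.map_add_eq_mul]
    linear_combination (-(ψ w.y) * v.x) * hv - w.x * hw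
  · simp [commutatorElement_def]

section ZMod

variable {n : ℕ} {ψ : AddChar (ZMod n) (ZMod n)}

lemma pow_card_eq_one_of_twist_eq_one {v : TwistedProd ψ} (h : ψ v.y = 1) : v ^ n = 1 := by
  ext <;> simp [pow_eq_of_twist_eq_one h]

variable [NeZero n]

lemma eq_pow_mul_pow (v : TwistedProd ψ) :
    v = (⟨1, 0⟩ : TwistedProd ψ) ^ v.x.val * (⟨0, 1⟩ : TwistedProd ψ) ^ v.y.val := by
  ext <;> simp [inl_pow, inr_pow]

lemma closure_eq_top_of_mem {H : Subgroup (TwistedProd ψ)} {u : ZMod n} (hu : IsUnit u)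
    (hC : ⟨u, 0⟩ ∈ H) {B : TwistedProd ψ} (hB : B ∈ H) (hBy : IsUnit B.y) : H = ⊤ := by
  have h_inl : ∀ x : ZMod n, (⟨x, 0⟩ : TwistedProd ψ) ∈ H := by
    intro x
    obtain ⟨k, rfl⟩ := exists_nsmul_eq_of_isUnit hu x
    simpa [inl_pow] using H.pow_mem hC k
  refine eq_top_iff.2 fun v _ => ?_
  obtain ⟨k, hk⟩ := exists_nsmul_eq_of_isUnit hBy v.y
  have hv : v = ⟨v.x - (B ^ k).x, 0⟩ * B ^ k := by ext <;> simp [pow_eq, hk]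
  rw [hv]
  exact H.mul_mem (h_inl _) (H.pow_mem hB k)

end ZMod

end TwistedProd

section Presentation

variable (p e i : ℕ)

lemma ma_mb_relations :
    ma p e i ^ p ^ e = 1 ∧ mb p e i ^ p ^ e = 1 ∧ ⁅ma p e i, mb p e i⁆ = ma p e i ^ p ^ i :=
  (forall_lift_eq_one_MRels_iff _).1 fun _ hr => lift_hom_of_eq_one (MonoidHom.id _) hr

lemma mb_mul_ma_mul_mb_inv :
    mb p e i * ma p e i * (mb p e i)⁻¹ = ma p e i ^ (1 - (p : ℤ) ^ i) := by
  have h := (ma_mb_relations p e i).2.2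
  rw [commutatorElement_def] at h
  calc mb p e i * ma p e i * (mb p e i)⁻¹
      = (ma p e i * mb p e i * (ma p e i)⁻¹ * (mb p e i)⁻¹)⁻¹ * ma p e i := by group
    _ = ma p e i ^ (1 - (p : ℤ) ^ i) := by
      rw [h, zpow_sub, zpow_one, ← zpow_natCast, Nat.cast_pow]; group

lemma mb_pow_mul_ma_zpow_mul (k : ℕ) (z : ℤ) :
    mb p e i ^ k * ma p e i ^ z * (mb p e i ^ k)⁻¹ = ma p e i ^ ((1 - (p : ℤ) ^ i) ^ k * z) := by
  induction k with
  | zero => simp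
  | succ k ih =>
    calc mb p e i ^ (k + 1) * ma p e i ^ z * (mb p e i ^ (k + 1))⁻¹
        = mb p e i * (mb p e i ^ k * ma p e i ^ z * (mb p e i ^ k)⁻¹) * (mb p e i)⁻¹ := by group
      _ = ma p e i ^ ((1 - (p : ℤ) ^ i) ^ (k + 1) * z) := by
        rw [ih, ← conj_zpow, mb_mul_ma_mul_mb_inv, ← zpow_mul, pow_succ]; ring_nf

lemma closure_ma_mb_eq_top : closure {ma p e i, mb p e i} = ⊤ := by
  rw [← range_cond_bool, ← PresentedGroup.closure_range_of (MRels p e i)]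
  congr
  ext x
  cases x <;> rfl

lemma mulAut_ext {θ θ' : MulAut (MGroup p e i)} (ha : θ (ma p e i) = θ' (ma p e i))
    (hb : θ (mb p e i) = θ' (mb p e i)) : θ = θ' :=
  MulEquiv.toMonoidHom_injective <| PresentedGroup.ext fun x => by cases x; exacts [hb, ha]

end Presentation

section Model

variable (p e i : ℕ)

/-- The relation `[a, b] = a ^ p ^ i` says `b * a * b⁻¹ = a ^ conjExp p e i`. -/
def conjExp : ZMod (p ^ e) := 1 - (p : ZMod (p ^ e)) ^ i

lemma conjExp_pow_prime_pow [NeZero i] : conjExp p e i ^ p ^ e = 1 := by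
  have hdvd : (p : ZMod (p ^ e)) ∣ conjExp p e i - 1 := by
    rw [show conjExp p e i - 1 = -(p : ZMod (p ^ e)) ^ i by rw [conjExp]; ring]
    exact (dvd_pow_self _ (NeZero.ne i)).neg_right
  have := dvd_sub_pow_of_dvd_sub hdvd e
  rwa [one_pow, pow_succ, ← Nat.cast_pow, ZMod.natCast_self, zero_mul, zero_dvd_iff,
    sub_eq_zero] at this

variable [Fact p.Prime]

abbrev toZModPowSub : ZMod (p ^ e) →+* ZMod (p ^ (e - i)) :=
  ZMod.castHom (pow_dvd_pow p (Nat.sub_le e i)) _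

abbrev toZModPrime (he : e ≠ 0) : ZMod (p ^ e) →+* ZMod p := ZMod.castHom (dvd_pow_self p he) _

lemma pow_nsmul_eq_zero_iff (hie : i ≤ e) (y : ZMod (p ^ e)) :
    p ^ i • y = 0 ↔ toZModPowSub p e i y = 0 := by
  have hp := (Fact.out : p.Prime)
  conv_lhs => rw [← ZMod.natCast_zmod_val y]
  rw [castHom_eq_zero_iff_dvd_val, nsmul_eq_mul, ← Nat.cast_mul, ZMod.natCast_eq_zero_iff,
    Iff.comm, ← Nat.mul_dvd_mul_iff_left (pow_pos hp.pos i), ← pow_add, Nat.add_sub_cancel' hie]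

lemma isUnit_natCast_iff (he : e ≠ 0) (k : ℕ) : IsUnit (k : ZMod (p ^ e)) ↔ ¬ p ∣ k := by
  rw [ZMod.isUnit_iff_coprime, Nat.coprime_pow_right_iff (Nat.pos_of_ne_zero he),
    Nat.coprime_comm, (Fact.out : p.Prime).coprime_iff_not_dvd]

lemma isUnit_iff_toZModPrime_ne_zero (he : e ≠ 0) (x : ZMod (p ^ e)) :
    IsUnit x ↔ toZModPrime p e he x ≠ 0 := by
  rw [← ZMod.natCast_zmod_val x, isUnit_natCast_iff p e he, map_natCast, Ne,
    ZMod.natCast_eq_zero_iff]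

variable [NeZero i]

def mTwist : AddChar (ZMod (p ^ e)) (ZMod (p ^ e)) :=
  AddChar.zmodChar _ (conjExp_pow_prime_pow p e i)

abbrev MModel : Type := TwistedProd (mTwist p e i)

lemma mTwist_apply (y : ZMod (p ^ e)) : mTwist p e i y = conjExp p e i ^ y.val := rfl

lemma mTwist_natCast (k : ℕ) : mTwist p e i k = conjExp p e i ^ k :=
  AddChar.zmodChar_apply' _ k

@[simp] lemma mTwist_one : mTwist p e i 1 = conjExp p e i := by
  simpa using mTwist_natCast p e i 1

lemma orderOf_conjExp (hp2 : p ≠ 2) (hie : i ≤ e) : orderOf (conjExp p e i) = p ^ (e - i) := by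
  have hp := (Fact.out : p.Prime)
  have h3 : 3 ≤ p := by have := hp.two_le; omega
  have := ZMod.orderOf_one_add_mul_prime_pow hp i (NeZero.ne i)
    (by nlinarith [Nat.one_le_iff_ne_zero.2 (NeZero.ne i)]) (-1)
    (by simpa [Int.natCast_dvd] using hp.ne_one) (e - i)
  rw [Nat.sub_add_cancel hie] at this
  rw [← this, conjExp]
  push_cast
  ring_nf

lemma conjExp_pow_eq_one_iff (hp2 : p ≠ 2) (hie : i ≤ e) (k : ℕ) :
    conjExp p e i ^ k = 1 ↔ p ^ (e - i) ∣ k := by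
  rw [← orderOf_dvd_iff_pow_eq_one, orderOf_conjExp p e i hp2 hie]

lemma mTwist_eq_one_iff (hp2 : p ≠ 2) (hie : i ≤ e) (y : ZMod (p ^ e)) :
    mTwist p e i y = 1 ↔ toZModPowSub p e i y = 0 := by
  rw [mTwist_apply, conjExp_pow_eq_one_iff p e i hp2 hie, castHom_eq_zero_iff_dvd_val]

lemma mTwist_eq_conjExp_iff (hp2 : p ≠ 2) (hie : i ≤ e) (y : ZMod (p ^ e)) :
    mTwist p e i y = conjExp p e i ↔ toZModPowSub p e i y = 1 := by
  have hc : IsUnit (conjExp p e i) := IsUnit.of_pow_eq_one (conjExp_pow_prime_pow p e i)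
    (pow_ne_zero _ (Fact.out : p.Prime).ne_zero)
  rw [← sub_add_cancel y 1, AddChar.map_add_eq_mul, mTwist_one, hc.mul_eq_right,
    mTwist_eq_one_iff p e i hp2 hie, map_add, map_one, add_eq_right]

lemma mTwist_natCast_add_mul (hp2 : p ≠ 2) (hie : i ≤ e) (j m : ℕ) :
    mTwist p e i ↑(j + m * p ^ (e - i)) = conjExp p e i ^ j := by
  rw [mTwist_natCast, pow_add, (conjExp_pow_eq_one_iff p e i hp2 hie _).2 (dvd_mul_left _ _),
    mul_one]

lemma toZModPrime_mTwist (he : e ≠ 0) (y : ZMod (p ^ e)) :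
    toZModPrime p e he (mTwist p e i y) = 1 := by
  rw [mTwist_apply, map_pow, conjExp, map_sub, map_one, map_pow, map_natCast,
    ZMod.natCast_self, zero_pow (NeZero.ne i), sub_zero, one_pow]

/-- The quotient by the Frattini subgroup. -/
def frattiniMap (he : e ≠ 0) : MModel p e i →* Multiplicative (ZMod p × ZMod p) where
  toFun v := .ofAdd (toZModPrime p e he v.x, toZModPrime p e he v.y)
  map_one' := by simp only [TwistedProd.one_x, TwistedProd.one_y, map_zero]; rfl
  map_mul' v w := by
    rw [← ofAdd_add, Prod.mk_add_mk]
    simp only [TwistedProd.mul_x, TwistedProd.mul_y, map_add, map_mul, toZModPrime_mTwist,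
      one_mul]

lemma frattiniMap_apply (he : e ≠ 0) (v : MModel p e i) :
    frattiniMap p e i he v = .ofAdd (toZModPrime p e he v.x, toZModPrime p e he v.y) := rfl

lemma frattiniMap_surjective (he : e ≠ 0) : Function.Surjective (frattiniMap p e i he) := by
  intro z
  obtain ⟨x, hx⟩ := ZMod.castHom_surjective (dvd_pow_self p he) z.toAdd.1
  obtain ⟨y, hy⟩ := ZMod.castHom_surjective (dvd_pow_self p he) z.toAdd.2
  exact ⟨⟨x, y⟩, by rw [frattiniMap_apply, hx, hy]; rfl⟩

lemma isUnit_x_of_closure_eq_top (he : e ≠ 0) {A B : MModel p e i} (h : closure {A, B} = ⊤)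
    (hAy : toZModPrime p e he A.y = 0) : IsUnit A.x := by
  rw [isUnit_iff_toZModPrime_ne_zero p e he]
  intro hAx
  have := isCyclic_of_closure_pair_eq_top (frattiniMap_surjective p e i he) h
    (by rw [frattiniMap_apply, hAx, hAy]; rfl)
  have := coprime_card_of_isAddCyclic_prod (ZMod p) (ZMod p)
    (cyc := isCyclic_multiplicative_iff.1 this)
  rw [Nat.card_zmod, Nat.coprime_self] at this
  exact (Fact.out : p.Prime).ne_one this

lemma closure_eq_top_of_isUnit (he : e ≠ 0) {A B : MModel p e i} (hAx : IsUnit A.x)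
    (hAy : toZModPrime p e he A.y = 0) (hBy : IsUnit B.y) : closure {A, B} = ⊤ := by
  -- `A * B ^ k` lies in `⟨a⟩`, and it is congruent to `A` modulo `p` because `p ∣ k`.
  obtain ⟨k, hk⟩ := exists_nsmul_eq_of_isUnit hBy (-A.y)
  have hkp : (k : ZMod p) = 0 := by
    have := congrArg (toZModPrime p e he) hk
    rw [nsmul_eq_mul, map_mul, map_natCast, map_neg, hAy, neg_zero] at this
    exact (mul_eq_zero.1 this).resolve_right ((isUnit_iff_toZModPrime_ne_zero p e he _).1 hBy)
  have hCx : toZModPrime p e he (A * B ^ k).x = toZModPrime p e he A.x := by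
    simp only [TwistedProd.pow_eq, TwistedProd.mul_x, map_add, map_mul, map_sum, map_pow,
      toZModPrime_mTwist, one_pow, sum_const, card_range, nsmul_one, hkp, mul_zero, add_zero]
  have hC : (⟨(A * B ^ k).x, 0⟩ : MModel p e i) = A * B ^ k := by
    ext
    · rfl
    · simp [TwistedProd.pow_eq, hk]
  refine TwistedProd.closure_eq_top_of_mem ?_ (hC ▸ mul_mem (subset_closure (by simp))
    (pow_mem (subset_closure (by simp)) k)) (subset_closure (by simp)) hBy
  rw [isUnit_iff_toZModPrime_ne_zero p e he, hCx]
  exact (isUnit_iff_toZModPrime_ne_zero p e he _).1 hAx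

lemma commutator_eq_pow_iff (hp2 : p ≠ 2) (hie : i ≤ e) {A B : MModel p e i}
    (hAy : mTwist p e i A.y = 1) (hAx : IsUnit A.x) :
    ⁅A, B⁆ = A ^ p ^ i ↔ mTwist p e i B.y = conjExp p e i := by
  have hnsmul :=
    (pow_nsmul_eq_zero_iff p e i hie A.y).2 ((mTwist_eq_one_iff p e i hp2 hie _).1 hAy)
  rw [TwistedProd.commutator_eq, TwistedProd.pow_eq_of_twist_eq_one hAy, hnsmul, hAy,
    TwistedProd.mk.injEq, and_iff_left rfl, sub_self, zero_mul, add_zero, nsmul_eq_mul,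
    mul_comm _ A.x, hAx.mul_right_inj, conjExp]
  push_cast
  constructor <;> intro h <;> linear_combination -h

lemma pow_prime_pow_eq_one_of_twist_eq_conjExp (hp2 : p ≠ 2) (hie : i ≤ e) {B : MModel p e i}
    (hB : mTwist p e i B.y = conjExp p e i) : B ^ p ^ e = 1 := by
  -- `B ^ p ^ (e - i)` has trivial twist, and `p ^ i * ∑ c ^ j = 1 - c ^ p ^ (e - i) = 0`.
  have hct : conjExp p e i ^ p ^ (e - i) = 1 := (conjExp_pow_eq_one_iff p e i hp2 hie _).2 dvd_rfl
  have hsum : (p : ZMod (p ^ e)) ^ i * ∑ j ∈ range (p ^ (e - i)), conjExp p e i ^ j = 0 := by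
    have hc1 : conjExp p e i - 1 = -(p : ZMod (p ^ e)) ^ i := by rw [conjExp]; ring
    have := mul_geom_sum (conjExp p e i) (p ^ (e - i))
    rw [hct] at this
    linear_combination -this + (∑ j ∈ range (p ^ (e - i)), conjExp p e i ^ j) * hc1
  have ht : mTwist p e i ((B ^ p ^ (e - i)).y) = 1 := by
    rw [TwistedProd.pow_eq, AddChar.map_nsmul_eq_pow, hB, hct]
  have hpow : B ^ p ^ e = (B ^ p ^ (e - i)) ^ p ^ i := by
    rw [← pow_mul, ← pow_add, Nat.sub_add_cancel hie]
  rw [hpow, TwistedProd.pow_eq_of_twist_eq_one ht]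
  ext
  · simp only [TwistedProd.pow_eq, hB, nsmul_eq_mul, TwistedProd.one_x]
    push_cast
    linear_combination B.x * hsum
  · simp only [TwistedProd.pow_eq, nsmul_eq_mul, TwistedProd.one_y]
    rw [← mul_assoc, ← Nat.cast_mul, ← pow_add, Nat.add_sub_cancel' hie, ZMod.natCast_self,
      zero_mul]

def IsAutPair (A B : MModel p e i) : Prop :=
  mTwist p e i A.y = 1 ∧ IsUnit A.x ∧ mTwist p e i B.y = conjExp p e i

theorem relations_and_closure_eq_top_iff (hp2 : p ≠ 2) (hie : i < e) (A B : MModel p e i) :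
    (A ^ p ^ e = 1 ∧ B ^ p ^ e = 1 ∧ ⁅A, B⁆ = A ^ p ^ i) ∧ closure {A, B} = ⊤ ↔
      IsAutPair p e i A B := by
  have he : e ≠ 0 := by omega
  have hprime : ∀ y, toZModPrime p e he y =
      ZMod.castHom (dvd_pow_self p (by omega : e - i ≠ 0)) _ (toZModPowSub p e i y) :=
    fun y => by rw [← RingHom.comp_apply, ZMod.castHom_comp]
  constructor
  · rintro ⟨⟨-, -, hcomm⟩, hgen⟩
    have hAy : mTwist p e i A.y = 1 := by
      rw [mTwist_eq_one_iff p e i hp2 hie.le, ← pow_nsmul_eq_zero_iff p e i hie.le]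
      simpa [TwistedProd.commutator_eq, TwistedProd.pow_eq] using
        (congrArg TwistedProd.y hcomm).symm
    have hAx := isUnit_x_of_closure_eq_top p e i he hgen
      (by rw [hprime, (mTwist_eq_one_iff p e i hp2 hie.le _).1 hAy, map_zero])
    exact ⟨hAy, hAx, (commutator_eq_pow_iff p e i hp2 hie.le hAy hAx).1 hcomm⟩
  · rintro ⟨hAy, hAx, hBy⟩
    refine ⟨⟨TwistedProd.pow_card_eq_one_of_twist_eq_one hAy,
      pow_prime_pow_eq_one_of_twist_eq_conjExp p e i hp2 hie.le hBy,
      (commutator_eq_pow_iff p e i hp2 hie.le hAy hAx).2 hBy⟩,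
      closure_eq_top_of_isUnit p e i he hAx ?_ ?_⟩
    · rw [hprime, (mTwist_eq_one_iff p e i hp2 hie.le _).1 hAy, map_zero]
    · rw [isUnit_iff_toZModPrime_ne_zero p e he, hprime,
        (mTwist_eq_conjExp_iff p e i hp2 hie.le _).1 hBy, map_one]
      exact one_ne_zero

def toModel : MGroup p e i →* MModel p e i :=
  PresentedGroup.toGroup (f := fun x => bif x then ⟨1, 0⟩ else ⟨0, 1⟩) <|
    (forall_lift_eq_one_MRels_iff _).2
      ⟨TwistedProd.pow_card_eq_one_of_twist_eq_one (AddChar.map_zero_eq_one _),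
        by ext <;> simp [TwistedProd.inr_pow],
        by simp [TwistedProd.commutator_eq, TwistedProd.inl_pow, conjExp]⟩

def ofModel : MModel p e i →* MGroup p e i where
  toFun v := ma p e i ^ v.x.val * mb p e i ^ v.y.val
  map_one' := by simp
  map_mul' v w := by
    obtain ⟨ha, hb, -⟩ := ma_mb_relations p e i
    have hx : ma p e i ^ (v * w).x.val =
        ma p e i ^ ((v.x.val : ℤ) + (1 - (p : ℤ) ^ i) ^ v.y.val * w.x.val) :=
      pow_val_eq_zpow ha (by simp [mTwist_apply, conjExp])
    have hy : mb p e i ^ (v * w).y.val = mb p e i ^ ((v.y.val : ℤ) + w.y.val) :=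
      pow_val_eq_zpow hb (by simp)
    rw [hx, hy, zpow_add, zpow_add, ← mb_pow_mul_ma_zpow_mul]
    simp only [zpow_natCast]
    group

lemma toModel_ma : toModel p e i (ma p e i) = ⟨1, 0⟩ := PresentedGroup.toGroup.of _

lemma toModel_mb : toModel p e i (mb p e i) = ⟨0, 1⟩ := PresentedGroup.toGroup.of _

lemma ofModel_apply (v : MModel p e i) :
    ofModel p e i v = ma p e i ^ v.x.val * mb p e i ^ v.y.val := rfl

noncomputable def mEquiv : MGroup p e i ≃* MModel p e i :=
  MonoidHom.toMulEquiv (toModel p e i) (ofModel p e i)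
    (PresentedGroup.ext fun x => by
      obtain ⟨ha, hb, -⟩ := ma_mb_relations p e i
      cases x
      · rw [MonoidHom.comp_apply, MonoidHom.id_apply, ← mb, toModel_mb, ofModel_apply,
          ZMod.val_zero, pow_zero, one_mul, pow_val_eq_zpow hb (z := 1) (by simp), zpow_one]
      · rw [MonoidHom.comp_apply, MonoidHom.id_apply, ← ma, toModel_ma, ofModel_apply,
          ZMod.val_zero, pow_zero, mul_one, pow_val_eq_zpow ha (z := 1) (by simp), zpow_one])
    (MonoidHom.ext fun v => by
      rw [MonoidHom.comp_apply, ofModel_apply, map_mul, map_pow, map_pow, toModel_ma,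
        toModel_mb, MonoidHom.id_apply, ← TwistedProd.eq_pow_mul_pow])

lemma mEquiv_mb_pow_mul_ma_pow (y x : ℕ) :
    mEquiv p e i (mb p e i ^ y * ma p e i ^ x) = ⟨mTwist p e i y * x, y⟩ := by
  ext <;> simp [mEquiv, toModel_ma, toModel_mb, TwistedProd.inl_pow, TwistedProd.inr_pow]

lemma isAutPair_of_mulAut (hp2 : p ≠ 2) (hie : i < e) (θ : MulAut (MGroup p e i)) :
    IsAutPair p e i (mEquiv p e i (θ (ma p e i))) (mEquiv p e i (θ (mb p e i))) := by
  let φ := (θ.trans (mEquiv p e i)).toMonoidHom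
  obtain ⟨ha, hb, hab⟩ := ma_mb_relations p e i
  refine (relations_and_closure_eq_top_iff p e i hp2 hie _ _).1 ⟨?_, ?_⟩
  · change φ _ ^ p ^ e = 1 ∧ φ _ ^ p ^ e = 1 ∧ ⁅φ _, φ _⁆ = φ _ ^ p ^ i
    simp only [← map_pow, ← map_commutatorElement, ha, hb, hab, map_one, and_self]
  · exact closure_pair_eq_top_of_surjective (f := φ) (θ.trans (mEquiv p e i)).surjective
      (closure_ma_mb_eq_top p e i)

lemma exists_mulAut_of_isAutPair (hp2 : p ≠ 2) (hie : i < e) {A B : MModel p e i}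
    (h : IsAutPair p e i A B) : ∃ θ : MulAut (MGroup p e i),
      mEquiv p e i (θ (ma p e i)) = A ∧ mEquiv p e i (θ (mb p e i)) = B := by
  obtain ⟨hrels, hgen⟩ := (relations_and_closure_eq_top_iff p e i hp2 hie A B).2 h
  obtain ⟨φ, hφ⟩ := exists_mulEquiv_of_closure_range_eq_top (mEquiv p e i)
    (f := fun x => bif x then A else B) ((forall_lift_eq_one_MRels_iff _).2 hrels)
    (by rwa [range_cond_bool])
  exact ⟨φ.trans (mEquiv p e i).symm, by simp [ma, hφ], by simp [mb, hφ]⟩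

lemma exists_mulAut_iff (hp2 : p ≠ 2) (hie : i < e) (X Y : MGroup p e i) :
    (∃ θ : MulAut (MGroup p e i), θ (ma p e i) = X ∧ θ (mb p e i) = Y) ↔
      IsAutPair p e i (mEquiv p e i X) (mEquiv p e i Y) := by
  constructor
  · rintro ⟨θ, rfl, rfl⟩
    exact isAutPair_of_mulAut p e i hp2 hie θ
  · intro h
    obtain ⟨θ, ha, hb⟩ := exists_mulAut_of_isAutPair p e i hp2 hie h
    exact ⟨θ, (mEquiv p e i).injective ha, (mEquiv p e i).injective hb⟩

noncomputable def mulAutEquivIsAutPair (hp2 : p ≠ 2) (hie : i < e) :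
    MulAut (MGroup p e i) ≃ {AB : MModel p e i × MModel p e i // IsAutPair p e i AB.1 AB.2} :=
  Equiv.ofBijective
    (fun θ => ⟨(mEquiv p e i (θ (ma p e i)), mEquiv p e i (θ (mb p e i))),
      isAutPair_of_mulAut p e i hp2 hie θ⟩)
    ⟨fun _ _ h => mulAut_ext p e i ((mEquiv p e i).injective (congrArg (·.1.1) h))
        ((mEquiv p e i).injective (congrArg (·.1.2) h)),
      fun ⟨_, h⟩ => (exists_mulAut_of_isAutPair p e i hp2 hie h).imp
        fun _ hθ => Subtype.ext (Prod.ext hθ.1 hθ.2)⟩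

lemma card_isAutPair (hp2 : p ≠ 2) (hie : i < e) :
    Nat.card {AB : MModel p e i × MModel p e i // IsAutPair p e i AB.1 AB.2} =
      (p - 1) * p ^ (2 * e + 2 * i - 1) := by
  have hp := (Fact.out : p.Prime)
  let split : {AB : MModel p e i × MModel p e i // IsAutPair p e i AB.1 AB.2} ≃
      {y // mTwist p e i y = 1} × {x : ZMod (p ^ e) // IsUnit x} ×
        {y // mTwist p e i y = conjExp p e i} × ZMod (p ^ e) :=
    { toFun := fun AB =>
        (⟨AB.1.1.y, AB.2.1⟩, ⟨AB.1.1.x, AB.2.2.1⟩, ⟨AB.1.2.y, AB.2.2.2⟩, AB.1.2.x)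
      invFun := fun t => ⟨(⟨t.2.1.1, t.1.1⟩, ⟨t.2.2.2, t.2.2.1.1⟩), t.1.2, t.2.1.2, t.2.2.1.2⟩
      left_inv := fun _ => rfl
      right_inv := fun _ => rfl }
  have hfib : ∀ z, Nat.card {y : ZMod (p ^ e) // toZModPowSub p e i y = z} = p ^ i := fun z => by
    rw [card_castHom_fiber, Nat.pow_div (Nat.sub_le e i) hp.pos, Nat.sub_sub_self hie.le]
  have hunits : Nat.card {x : ZMod (p ^ e) // IsUnit x} = Nat.card (ZMod (p ^ e))ˣ :=
    (Nat.card_congr (Equiv.ofInjective _ Units.val_injective)).symm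
  rw [Nat.card_congr split, Nat.card_prod, Nat.card_prod, Nat.card_prod,
    Nat.card_congr (Equiv.subtypeEquivRight (mTwist_eq_one_iff p e i hp2 hie.le)),
    Nat.card_congr (Equiv.subtypeEquivRight (mTwist_eq_conjExp_iff p e i hp2 hie.le)),
    hfib, hfib, hunits, Nat.card_eq_fintype_card, ZMod.card_units_eq_totient,
    Nat.totient_prime_pow hp (by omega), Nat.card_zmod,
    show 2 * e + 2 * i - 1 = i + (e - 1) + i + e by omega]
  ring

lemma exists_mulAut_iff_not_dvd (hp2 : p ≠ 2) (hie : i < e) (m r n s : ℕ) :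
    (∃ θ : MulAut (MGroup p e i),
        θ (ma p e i) = mb p e i ^ (m * p ^ (e - i)) * ma p e i ^ n ∧
        θ (mb p e i) = mb p e i ^ (1 + r * p ^ (e - i)) * ma p e i ^ s) ↔ ¬ p ∣ n := by
  have hm := mTwist_natCast_add_mul p e i hp2 hie.le 0 m
  rw [zero_add, pow_zero] at hm
  rw [exists_mulAut_iff p e i hp2 hie, mEquiv_mb_pow_mul_ma_pow, mEquiv_mb_pow_mul_ma_pow,
    IsAutPair, hm, one_mul, mTwist_natCast_add_mul p e i hp2 hie.le, pow_one,
    isUnit_natCast_iff p e (by omega)]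
  simp

lemma exists_normalForm_of_mulAut (hp2 : p ≠ 2) (hie : i < e) (θ : MulAut (MGroup p e i)) :
    ∃ m r n s : ℕ,
      1 ≤ m ∧ m ≤ p ^ i ∧ 1 ≤ r ∧ r ≤ p ^ i ∧ 1 ≤ n ∧ n ≤ p ^ e ∧ 1 ≤ s ∧ s ≤ p ^ e ∧
      ¬ p ∣ n ∧
      θ (ma p e i) = mb p e i ^ (m * p ^ (e - i)) * ma p e i ^ n ∧
      θ (mb p e i) = mb p e i ^ (1 + r * p ^ (e - i)) * ma p e i ^ s := by
  obtain ⟨hAy, hAx, hBy⟩ := isAutPair_of_mulAut p e i hp2 hie θ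
  set A := mEquiv p e i (θ (ma p e i))
  set B := mEquiv p e i (θ (mb p e i))
  have hdiv : p ^ e / p ^ (e - i) = p ^ i := by
    rw [Nat.pow_div (Nat.sub_le e i) (Fact.out : p.Prime).pos, Nat.sub_sub_self hie.le]
  obtain ⟨m, hm1, hm2, hmA⟩ := exists_mem_Icc_eq_natCast_add_mul (j := 0)
    (pow_dvd_pow p (Nat.sub_le e i))
    (by rw [Nat.cast_zero]; exact (mTwist_eq_one_iff p e i hp2 hie.le _).1 hAy)
  obtain ⟨r, hr1, hr2, hrB⟩ := exists_mem_Icc_eq_natCast_add_mul (j := 1)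
    (pow_dvd_pow p (Nat.sub_le e i))
    (by rw [Nat.cast_one]; exact (mTwist_eq_conjExp_iff p e i hp2 hie.le _).1 hBy)
  obtain ⟨n, hn1, hn2, hnA⟩ := exists_mem_Icc_natCast_eq A.x
  obtain ⟨s, hs1, hs2, hsB⟩ := exists_mem_Icc_natCast_eq (mTwist p e i (-B.y) * B.x)
  rw [zero_add] at hmA
  refine ⟨m, r, n, s, hm1, hdiv ▸ hm2, hr1, hdiv ▸ hr2, hn1, hn2, hs1, hs2,
    (isUnit_natCast_iff p e (by omega) n).1 (hnA ▸ hAx), ?_, ?_⟩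
  · apply (mEquiv p e i).injective
    rw [mEquiv_mb_pow_mul_ma_pow, ← hmA, hAy, one_mul, hnA]
  · apply (mEquiv p e i).injective
    rw [mEquiv_mb_pow_mul_ma_pow, ← hrB, hsB, ← mul_assoc, ← AddChar.map_add_eq_mul,
      add_neg_cancel, AddChar.map_zero_eq_one, one_mul]

end Model

section Statements

theorem statement3 (p e i : ℕ) (hp : p.Prime) (hodd : Odd p) (h1 : 1 ≤ i) (h2 : i ≤ e - 1) :
    (∀ m r n s : ℕ, 1 ≤ m → m ≤ p ^ i → 1 ≤ r → r ≤ p ^ i →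
      1 ≤ n → n ≤ p ^ e → 1 ≤ s → s ≤ p ^ e →
      ((∃ θ : MulAut (MGroup p e i),
          θ (ma p e i) = mb p e i ^ (m * p ^ (e - i)) * ma p e i ^ n ∧
          θ (mb p e i) = mb p e i ^ (1 + r * p ^ (e - i)) * ma p e i ^ s) ↔ ¬ p ∣ n)) ∧
    (∀ θ : MulAut (MGroup p e i), ∃ m r n s : ℕ,
      1 ≤ m ∧ m ≤ p ^ i ∧ 1 ≤ r ∧ r ≤ p ^ i ∧ 1 ≤ n ∧ n ≤ p ^ e ∧ 1 ≤ s ∧ s ≤ p ^ e ∧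
      ¬ p ∣ n ∧
      θ (ma p e i) = mb p e i ^ (m * p ^ (e - i)) * ma p e i ^ n ∧
      θ (mb p e i) = mb p e i ^ (1 + r * p ^ (e - i)) * ma p e i ^ s) ∧
    Nat.card (MulAut (MGroup p e i)) = (p - 1) * p ^ (2 * e + 2 * i - 1) := by
  have : Fact p.Prime := ⟨hp⟩
  have : NeZero i := ⟨by omega⟩
  have hp2 : p ≠ 2 := by rintro rfl; exact Nat.not_odd_iff_even.2 even_two hodd
  have hie : i < e := by omega
  exact ⟨fun m r n s _ _ _ _ _ _ _ _ => exists_mulAut_iff_not_dvd p e i hp2 hie m r n s,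
    exists_normalForm_of_mulAut p e i hp2 hie,
    (Nat.card_congr (mulAutEquivIsAutPair p e i hp2 hie)).trans (card_isAutPair p e i hp2 hie)⟩

end Statements

end Beauville
end

section
/- Let p be an odd prime and let G = H(p,e,i,j,k). Then Z(G) = G^{p^j}·G′, where G^{p^j} is the subgroup generated by all p^j-th powers of elements of G and G′ is the commutator subgroup of G. Consequently, |Z(G)| = p^{e+i−j}. -/
/-!
Write `c = ⁅b, a⁆`. As `c` is central, `(x, y, z) ↦ a ^ x * b ^ y * c ^ z` is a surjective
homomorphism from the integral Heisenberg group onto `H(p,e,i,j,k)`, and mapping `H(p,e,i,j,k)` to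
an explicit quotient of the Heisenberg group shows that its kernel consists exactly of the
`(x, y, z)` with `p ^ e ∣ x`, `y = m p ^ i` and `p ^ j ∣ z + m p ^ k`. Heisenberg commutators are
`(0, 0, y x' - y' x)`, so `a ^ x * b ^ y * c ^ z` is central iff `p ^ j` divides `x` and `y`; these
are the products of `p ^ j`-th powers and commutators, and every central element has exactly one
representative `(p ^ j u, p ^ j v, w)` with `u < p ^ (e - j)`, `v < p ^ (i - j)`, `w < p ^ j`.
-/

open Subgroup Equiv

open scoped commutatorElement
open Beauville (powSubgroup)

lemma zpow_mul_zpow_of_commutatorElement_mem_center {G : Type*} [Group G] {a b : G}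
    (hc : ⁅b, a⁆ ∈ Subgroup.center G) (m n : ℤ) :
    b ^ m * a ^ n = ⁅b, a⁆ ^ (m * n) * a ^ n * b ^ m := by
  set c := ⁅b, a⁆ with hc_def
  have hcomm : ∀ g : G, Commute g c := Subgroup.mem_center_iff.1 hc
  have hab : SemiconjBy a b (c⁻¹ * b) := by
    rw [SemiconjBy, hc_def, commutatorElement_def]; group
  have hbma : SemiconjBy (b ^ m) a (c ^ m * a) := by
    have h := (hab.zpow_right m).eq
    rw [((hcomm b).inv_right.symm).mul_zpow, inv_zpow] at h
    rw [SemiconjBy, mul_assoc, h, ← mul_assoc, ← mul_assoc, mul_inv_cancel, one_mul]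
  rw [(hbma.zpow_right n).eq, ((hcomm a).symm.zpow_left m).mul_zpow, ← zpow_mul]

theorem MonoidHom.mem_comap_center_iff {H G : Type*} [Group H] [Group G] {f : H →* G}
    (hf : Function.Surjective f) {h : H} :
    h ∈ (Subgroup.center G).comap f ↔ ∀ g, ⁅h, g⁆ ∈ f.ker := by
  rw [Subgroup.mem_comap, Subgroup.mem_center_iff, hf.forall]
  refine forall_congr' fun g => ?_
  rw [MonoidHom.mem_ker, map_commutatorElement, commutatorElement_eq_one_iff_commute]
  exact ⟨Commute.symm, Commute.symm⟩

theorem Subgroup.map_commutator_of_surjective {G H : Type*} [Group G] [Group H] {f : G →* H}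
    (hf : Function.Surjective f) : (_root_.commutator G).map f = _root_.commutator H := by
  rw [_root_.commutator_def, _root_.commutator_def, Subgroup.map_commutator,
    Subgroup.map_top_of_surjective f hf]

theorem Beauville.map_powSubgroup_of_surjective {G H : Type*} [Group G] [Group H] {f : G →* H}
    (hf : Function.Surjective f) (n : ℕ) : (powSubgroup G n).map f = powSubgroup H n := by
  rw [powSubgroup, powSubgroup, MonoidHom.map_closure, ← Set.range_comp,
    show f ∘ (· ^ n) = (· ^ n) ∘ f from funext fun g => map_pow f g n, hf.range_comp]

lemma ZMod.eq_of_dvd_val_sub {A : ℕ} [NeZero A] {u v : ZMod A}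
    (h : (A : ℤ) ∣ (v.val : ℤ) - u.val) : u = v := by
  have := (ZMod.natCast_eq_natCast_iff _ _ _).2 (Nat.modEq_iff_dvd.2 h)
  rwa [ZMod.natCast_zmod_val, ZMod.natCast_zmod_val] at this

lemma ZMod.dvd_sub_val_intCast {A : ℕ} [NeZero A] (x : ℤ) :
    (A : ℤ) ∣ x - ((x : ZMod A).val : ℤ) := by
  rw [ZMod.val_intCast]; exact Int.dvd_self_sub_emod

/-- `⟨x, y, z⟩` stands for `a ^ x * b ^ y * ⁅b, a⁆ ^ z`; the product formula comes from
`b ^ y * a ^ x' = ⁅b, a⁆ ^ (y * x') * a ^ x' * b ^ y`. -/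
@[ext]
structure Heisenberg (R : Type*) where
  x : R
  y : R
  z : R

namespace Heisenberg

section Ring

variable {R : Type*} [Ring R]

instance : Mul (Heisenberg R) := ⟨fun s t => ⟨s.x + t.x, s.y + t.y, s.z + t.z + s.y * t.x⟩⟩
instance : One (Heisenberg R) := ⟨⟨0, 0, 0⟩⟩
instance : Inv (Heisenberg R) := ⟨fun t => ⟨-t.x, -t.y, -t.z + t.y * t.x⟩⟩

@[simp] lemma mul_x (s t : Heisenberg R) : (s * t).x = s.x + t.x := rfl
@[simp] lemma mul_y (s t : Heisenberg R) : (s * t).y = s.y + t.y := rfl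
@[simp] lemma mul_z (s t : Heisenberg R) : (s * t).z = s.z + t.z + s.y * t.x := rfl
@[simp] lemma one_x : (1 : Heisenberg R).x = 0 := rfl
@[simp] lemma one_y : (1 : Heisenberg R).y = 0 := rfl
@[simp] lemma one_z : (1 : Heisenberg R).z = 0 := rfl
@[simp] lemma inv_x (t : Heisenberg R) : t⁻¹.x = -t.x := rfl
@[simp] lemma inv_y (t : Heisenberg R) : t⁻¹.y = -t.y := rfl
@[simp] lemma inv_z (t : Heisenberg R) : t⁻¹.z = -t.z + t.y * t.x := rfl

instance : Group (Heisenberg R) where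
  mul_assoc _ _ _ := by ext <;> simp only [mul_x, mul_y, mul_z, mul_add, add_mul] <;> abel
  one_mul _ := by ext <;> simp
  mul_one _ := by ext <;> simp
  inv_mul_cancel _ := by ext <;> simp

lemma commutatorElement_eq (s t : Heisenberg R) : ⁅s, t⁆ = ⟨0, 0, s.y * t.x - t.y * s.x⟩ := by
  ext <;> simp only [commutatorElement_def, mul_x, mul_y, mul_z, inv_x, inv_y, inv_z, add_mul,
    mul_neg, neg_mul] <;> abel

end Ring

lemma zpow_of_y_mul_x_eq_zero {t : Heisenberg ℤ} (h : t.y * t.x = 0) (n : ℤ) :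
    t ^ n = ⟨n * t.x, n * t.y, n * t.z⟩ := by
  induction n using Int.induction_on with
  | zero => rw [zpow_zero]; ext <;> simp
  | succ n ih =>
    rw [zpow_add_one, ih]
    ext <;> simp only [mul_x, mul_y, mul_z] <;> [ring; ring; linear_combination (n : ℤ) * h]
  | pred n ih =>
    rw [zpow_sub_one, ih]
    ext <;> simp only [mul_x, mul_y, mul_z, inv_x, inv_y, inv_z] <;> [ring; ring; linear_combination ((n : ℤ) + 1) * h]

lemma pow_of_y_mul_x_eq_zero {t : Heisenberg ℤ} (h : t.y * t.x = 0) (n : ℕ) :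
    t ^ n = ⟨n * t.x, n * t.y, n * t.z⟩ := by
  rw [← zpow_natCast, zpow_of_y_mul_x_eq_zero h]

lemma pow_x (t : Heisenberg ℤ) (n : ℕ) : (t ^ n).x = n * t.x := by
  induction n with
  | zero => simp
  | succ n ih => rw [pow_succ, mul_x, ih]; push_cast; ring

lemma pow_y (t : Heisenberg ℤ) (n : ℕ) : (t ^ n).y = n * t.y := by
  induction n with
  | zero => simp
  | succ n ih => rw [pow_succ, mul_y, ih]; push_cast; ring

lemma eq_zpow_mul_zpow_mul_zpow (t : Heisenberg ℤ) :
    t = (⟨1, 0, 0⟩ : Heisenberg ℤ) ^ t.x * (⟨0, 1, 0⟩ : Heisenberg ℤ) ^ t.y *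
      ⁅(⟨0, 1, 0⟩ : Heisenberg ℤ), (⟨1, 0, 0⟩ : Heisenberg ℤ)⁆ ^ t.z := by
  rw [commutatorElement_eq, zpow_of_y_mul_x_eq_zero (by simp), zpow_of_y_mul_x_eq_zero (by simp),
    zpow_of_y_mul_x_eq_zero (by simp)]
  ext <;> simp

theorem mem_powSubgroup_sup_commutator_iff (n : ℕ) (t : Heisenberg ℤ) :
    t ∈ powSubgroup (Heisenberg ℤ) n ⊔ commutator (Heisenberg ℤ) ↔
      (n : ℤ) ∣ t.x ∧ (n : ℤ) ∣ t.y := by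
  constructor
  · let S : Subgroup (Heisenberg ℤ) :=
      { carrier := {t | (n : ℤ) ∣ t.x ∧ (n : ℤ) ∣ t.y}
        mul_mem' := fun hs ht => ⟨dvd_add hs.1 ht.1, dvd_add hs.2 ht.2⟩
        one_mem' := ⟨dvd_zero _, dvd_zero _⟩
        inv_mem' := fun ht => ⟨(dvd_neg).2 ht.1, (dvd_neg).2 ht.2⟩ }
    refine fun ht => (sup_le ?_ ?_ : _ ≤ S) ht
    · rw [powSubgroup, Subgroup.closure_le]
      rintro _ ⟨s, rfl⟩
      exact ⟨Dvd.intro _ (pow_x s n).symm, Dvd.intro _ (pow_y s n).symm⟩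
    · rw [_root_.commutator_def, Subgroup.commutator_le]
      intro g _ h _
      simp [S, commutatorElement_eq]
  · rintro ⟨⟨u, hu⟩, ⟨v, hv⟩⟩
    let s : Heisenberg ℤ := ⟨u, v, 0⟩
    have ht : t = s ^ n *
        ⁅(⟨0, 1, 0⟩ : Heisenberg ℤ), (⟨1, 0, 0⟩ : Heisenberg ℤ)⁆ ^ (t.z - (s ^ n).z) := by
      rw [commutatorElement_eq, zpow_of_y_mul_x_eq_zero (by simp)]
      ext <;> simp [s, pow_x, pow_y, hu, hv]
    rw [ht]
    refine mul_mem (Subgroup.mem_sup_left (Subgroup.subset_closure ⟨s, rfl⟩))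
      (Subgroup.mem_sup_right (zpow_mem ?_ _))
    exact Subgroup.commutator_mem_commutator (Subgroup.mem_top _) (Subgroup.mem_top _)

section Lift

variable {G : Type*} [Group G]

def lift (a b : G) (hc : ⁅b, a⁆ ∈ Subgroup.center G) : Heisenberg ℤ →* G where
  toFun t := a ^ t.x * b ^ t.y * ⁅b, a⁆ ^ t.z
  map_one' := by simp
  map_mul' s t := by
    have hz : ∀ (g : G) (k : ℤ), Commute g (⁅b, a⁆ ^ k) := fun g k =>
      Commute.zpow_right (Subgroup.mem_center_iff.1 hc g) k
    symm
    calc a ^ s.x * b ^ s.y * ⁅b, a⁆ ^ s.z * (a ^ t.x * b ^ t.y * ⁅b, a⁆ ^ t.z)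
        = a ^ s.x * (b ^ s.y * a ^ t.x) * b ^ t.y * (⁅b, a⁆ ^ s.z * ⁅b, a⁆ ^ t.z) := by
          rw [(hz _ _).symm.mul_mul_mul_comm]; simp only [mul_assoc]
      _ = ⁅b, a⁆ ^ (s.y * t.x) * (a ^ s.x * a ^ t.x * (b ^ s.y * b ^ t.y) *
            (⁅b, a⁆ ^ s.z * ⁅b, a⁆ ^ t.z)) := by
          rw [zpow_mul_zpow_of_commutatorElement_mem_center hc]
          simp only [mul_assoc, (hz (a ^ s.x) _).left_comm]
      _ = a ^ (s.x + t.x) * b ^ (s.y + t.y) * ⁅b, a⁆ ^ (s.z + t.z + s.y * t.x) := by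
          rw [← (hz _ _).eq]; simp only [zpow_add, mul_assoc]

variable {a b : G} {hc : ⁅b, a⁆ ∈ Subgroup.center G}

lemma lift_apply (t : Heisenberg ℤ) : lift a b hc t = a ^ t.x * b ^ t.y * ⁅b, a⁆ ^ t.z := rfl

lemma lift_surjective (h : Subgroup.closure {a, b} = ⊤) : Function.Surjective (lift a b hc) := by
  rw [← MonoidHom.range_eq_top, eq_top_iff, ← h, Subgroup.closure_le, Set.insert_subset_iff,
    Set.singleton_subset_iff]
  exact ⟨⟨⟨1, 0, 0⟩, by simp [lift_apply]⟩, ⟨⟨0, 1, 0⟩, by simp [lift_apply]⟩⟩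

end Lift

/-- What the relations `a ^ (n * A) = 1`, `⁅b, a⁆ ^ n = 1` and `b ^ (n * B) = ⁅b, a⁆ ^ D`
force into the kernel of `lift a b`. -/
def relSubgroup (n A B D : ℕ) : Subgroup (Heisenberg ℤ) where
  carrier := {t | (n : ℤ) * A ∣ t.x ∧ ∃ m : ℤ, t.y = m * (n * B) ∧ (n : ℤ) ∣ t.z + m * D}
  mul_mem' := by
    rintro s t ⟨hsx, m, hsy, hsz⟩ ⟨htx, m', hty, htz⟩
    refine ⟨dvd_add hsx htx, m + m', by simp only [mul_y, hsy, hty]; ring, ?_⟩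
    have hny : (n : ℤ) ∣ s.y := ⟨m * B, by rw [hsy]; ring⟩
    have hz : (s * t).z + (m + m') * D = (s.z + m * D) + (t.z + m' * D) + s.y * t.x := by
      simp only [mul_z]; ring
    exact hz ▸ dvd_add (dvd_add hsz htz) (hny.mul_right _)
  one_mem' := ⟨dvd_zero _, 0, by simp, by simp⟩
  inv_mem' := by
    rintro t ⟨htx, m, hty, htz⟩
    refine ⟨(dvd_neg).2 htx, -m, by simp [hty], ?_⟩
    have hny : (n : ℤ) ∣ t.y := ⟨m * B, by rw [hty]; ring⟩
    have hz : t⁻¹.z + -m * D = -(t.z + m * D) + t.y * t.x := by simp only [inv_z]; ring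
    exact hz ▸ dvd_add ((dvd_neg).2 htz) (hny.mul_right _)

variable {n A B D : ℕ}

lemma mem_relSubgroup {t : Heisenberg ℤ} : t ∈ relSubgroup n A B D ↔
    (n : ℤ) * A ∣ t.x ∧ ∃ m : ℤ, t.y = m * (n * B) ∧ (n : ℤ) ∣ t.z + m * D :=
  Iff.rfl

instance : (relSubgroup n A B D).Normal where
  conj_mem t := by
    rintro ⟨htx, m, hty, htz⟩ g
    have hconj : g * t * g⁻¹ = ⟨t.x, t.y, t.z + (g.y * t.x - t.y * g.x)⟩ := by
      ext <;> simp only [mul_x, mul_y, mul_z, inv_x, inv_y, inv_z] <;> ring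
    have hnx : (n : ℤ) ∣ t.x := (dvd_mul_right _ _).trans htx
    have hny : (n : ℤ) ∣ t.y := ⟨m * B, by rw [hty]; ring⟩
    refine hconj ▸ ⟨htx, m, hty, ?_⟩
    rw [add_right_comm]
    exact dvd_add htz (dvd_sub (hnx.mul_left _) (hny.mul_right _))

lemma relSubgroup_le_ker_lift {G : Type*} [Group G] {a b : G} {hc : ⁅b, a⁆ ∈ Subgroup.center G}
    (ha : a ^ (n * A) = 1) (hcn : ⁅b, a⁆ ^ n = 1) (hb : b ^ (n * B) = ⁅b, a⁆ ^ D) :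
    relSubgroup n A B D ≤ (lift a b hc).ker := by
  rintro t ⟨⟨r, hr⟩, m, hm, s, hs⟩
  have hz : t.z = n * s - m * D := by linarith
  rw [← zpow_natCast, Nat.cast_mul] at ha hb
  rw [← zpow_natCast] at hcn hb
  rw [MonoidHom.mem_ker, lift_apply, hr, hm, hz, zpow_mul, ha, one_zpow, one_mul, mul_comm m,
    zpow_mul, hb, ← zpow_mul, ← zpow_add, show (D : ℤ) * m + (n * s - m * D) = n * s by ring,
    zpow_mul, hcn, one_zpow]

lemma commutatorElement_mem_relSubgroup_iff [NeZero n] [NeZero B] (s t : Heisenberg ℤ) :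
    ⁅s, t⁆ ∈ relSubgroup n A B D ↔ (n : ℤ) ∣ s.y * t.x - t.y * s.x := by
  rw [commutatorElement_eq, mem_relSubgroup]
  constructor
  · rintro ⟨-, m, hm, hd⟩
    obtain rfl : m = 0 := by simpa [NeZero.ne] using hm.symm
    simpa using hd
  · exact fun h => ⟨dvd_zero _, 0, by simp, by simpa using h⟩

def centralRep (n : ℕ) {A B : ℕ} (u : ZMod A × ZMod B × ZMod n) : Heisenberg ℤ :=
  ⟨n * u.1.val, n * u.2.1.val, u.2.2.val⟩

lemma eq_of_inv_centralRep_mul_mem [NeZero n] [NeZero A] [NeZero B]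
    {u v : ZMod A × ZMod B × ZMod n}
    (h : (centralRep n v)⁻¹ * centralRep n u ∈ relSubgroup n A B D) : u = v := by
  obtain ⟨u₁, u₂, u₃⟩ := u
  obtain ⟨v₁, v₂, v₃⟩ := v
  obtain ⟨hx, m, hy, hz⟩ := h
  simp only [centralRep, mul_x, mul_y, mul_z, inv_x, inv_y, inv_z] at hx hy hz
  have hn : (n : ℤ) ≠ 0 := by exact_mod_cast NeZero.ne n
  have hx' : (n : ℤ) * A ∣ n * ((u₁.val : ℤ) - v₁.val) := by convert hx using 1; ring
  obtain rfl : v₁ = u₁ := ZMod.eq_of_dvd_val_sub ((mul_dvd_mul_iff_left hn).1 hx')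
  have hy' : (u₂.val : ℤ) - v₂.val = m * B := by
    apply mul_left_cancel₀ hn
    linear_combination hy
  obtain rfl : v₂ = u₂ := ZMod.eq_of_dvd_val_sub ⟨m, by rw [hy']; ring⟩
  obtain rfl : m = 0 := by simpa [NeZero.ne] using hy'.symm
  obtain rfl : v₃ = u₃ := ZMod.eq_of_dvd_val_sub (by convert hz using 1; ring)
  rfl

lemma exists_inv_centralRep_mul_mem [NeZero n] [NeZero A] [NeZero B] {t : Heisenberg ℤ}
    (hx : (n : ℤ) ∣ t.x) (hy : (n : ℤ) ∣ t.y) :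
    ∃ u : ZMod A × ZMod B × ZMod n, (centralRep n u)⁻¹ * t ∈ relSubgroup n A B D := by
  obtain ⟨α, hα⟩ := hx
  obtain ⟨β, hβ⟩ := hy
  obtain ⟨r, hr⟩ := ZMod.dvd_sub_val_intCast (A := A) α
  obtain ⟨m, hm⟩ := ZMod.dvd_sub_val_intCast (A := B) β
  obtain ⟨s, hs⟩ := ZMod.dvd_sub_val_intCast (A := n) (t.z + m * D)
  refine ⟨((α : ZMod A), (β : ZMod B), ((t.z + m * D : ℤ) : ZMod n)), ⟨r, ?_⟩, m, ?_, ?_⟩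
  · simp only [centralRep, mul_x, inv_x, hα]; linear_combination n * hr
  · simp only [centralRep, mul_y, inv_y, hβ]; linear_combination n * hm
  · refine ⟨s - ((β : ZMod B).val : ℤ) * n * A * r, ?_⟩
    simp only [centralRep, mul_z, inv_z, inv_y, hα]
    linear_combination hs - (n : ℤ) ^ 2 * ((β : ZMod B).val : ℤ) * hr

section Quotient

variable {G : Type*} [Group G] {ψ : Heisenberg ℤ →* G}

theorem comap_center_eq [NeZero n] [NeZero B] (hψ : Function.Surjective ψ)
    (hker : ψ.ker = relSubgroup n A B D) :
    (Subgroup.center G).comap ψ = powSubgroup (Heisenberg ℤ) n ⊔ commutator (Heisenberg ℤ) := by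
  ext t
  rw [mem_powSubgroup_sup_commutator_iff, MonoidHom.mem_comap_center_iff hψ, hker]
  simp only [commutatorElement_mem_relSubgroup_iff]
  refine ⟨fun h => ⟨?_, ?_⟩, fun ⟨hx, hy⟩ s => dvd_sub (hy.mul_right _) (hx.mul_left _)⟩
  · simpa using h ⟨0, 1, 0⟩
  · simpa using h ⟨1, 0, 0⟩

theorem center_eq_powSubgroup_sup_commutator [NeZero n] [NeZero B] (hψ : Function.Surjective ψ)
    (hker : ψ.ker = relSubgroup n A B D) :
    Subgroup.center G = powSubgroup G n ⊔ commutator G := by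
  rw [← Subgroup.map_comap_eq_self_of_surjective hψ (Subgroup.center G), comap_center_eq hψ hker,
    Subgroup.map_sup, Beauville.map_powSubgroup_of_surjective hψ,
    Subgroup.map_commutator_of_surjective hψ]

theorem card_center [NeZero n] [NeZero A] [NeZero B] (hψ : Function.Surjective ψ)
    (hker : ψ.ker = relSubgroup n A B D) : Nat.card (Subgroup.center G) = A * B * n := by
  have hrep (u : ZMod A × ZMod B × ZMod n) : ψ (centralRep n u) ∈ Subgroup.center G := by
    rw [← Subgroup.mem_comap, comap_center_eq hψ hker, mem_powSubgroup_sup_commutator_iff]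
    exact ⟨dvd_mul_right _ _, dvd_mul_right _ _⟩
  have hbij : Function.Bijective fun u => (⟨ψ (centralRep n u), hrep u⟩ : Subgroup.center G) := by
    refine ⟨fun u v huv => eq_of_inv_centralRep_mul_mem (D := D) ?_, fun z => ?_⟩
    · rw [← hker, ← MonoidHom.eq_iff]
      exact congrArg Subtype.val huv
    · obtain ⟨t, ht⟩ := hψ z
      have htc : t ∈ (Subgroup.center G).comap ψ := by
        rw [Subgroup.mem_comap, ht]; exact z.2
      rw [comap_center_eq hψ hker, mem_powSubgroup_sup_commutator_iff] at htc
      obtain ⟨u, hu⟩ := exists_inv_centralRep_mul_mem (A := A) (B := B) (D := D) htc.1 htc.2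
      refine ⟨u, Subtype.ext ?_⟩
      rw [← hker, ← MonoidHom.eq_iff] at hu
      exact hu.symm.trans ht
  rw [← Nat.card_eq_of_bijective _ hbij, Nat.card_prod, Nat.card_prod, Nat.card_zmod,
    Nat.card_zmod, Nat.card_zmod, mul_assoc]

end Quotient

end Heisenberg

namespace Beauville

namespace HGroup

open Heisenberg

variable {p e i j k : ℕ}

lemma ha_pow : ha p e i j k ^ p ^ e = 1 := by
  have := PresentedGroup.one_of_mem (show fA ^ p ^ e ∈ HRels p e i j k by simp [HRels])
  rwa [map_pow] at this

lemma commutatorElement_pow : ⁅hb p e i j k, ha p e i j k⁆ ^ p ^ j = 1 := by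
  have := PresentedGroup.one_of_mem (show ⁅fB, fA⁆ ^ p ^ j ∈ HRels p e i j k by simp [HRels])
  rwa [map_pow, map_commutatorElement] at this

lemma hb_pow : hb p e i j k ^ p ^ i = ⁅hb p e i j k, ha p e i j k⁆ ^ p ^ k := by
  have := PresentedGroup.one_of_mem
    (show fB ^ p ^ i * (⁅fB, fA⁆ ^ p ^ k)⁻¹ ∈ HRels p e i j k by simp [HRels])
  rwa [map_mul, map_inv, map_pow, map_pow, map_commutatorElement, mul_inv_eq_one] at this

lemma closure_ha_hb : Subgroup.closure {ha p e i j k, hb p e i j k} = ⊤ := by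
  rw [eq_top_iff, ← PresentedGroup.closure_range_of, Subgroup.closure_le]
  rintro _ ⟨_ | _, rfl⟩
  exacts [Subgroup.subset_closure (Set.mem_insert_of_mem _ rfl),
    Subgroup.subset_closure (Set.mem_insert _ _)]

lemma commutatorElement_mem_center :
    ⁅hb p e i j k, ha p e i j k⁆ ∈ Subgroup.center (HGroup p e i j k) := by
  have hcomm : ∀ g ∈ ({ha p e i j k, hb p e i j k} : Set _),
      Commute ⁅hb p e i j k, ha p e i j k⁆ g := by
    rintro g (rfl | rfl) <;> rw [← commutatorElement_eq_one_iff_commute]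
    · have := PresentedGroup.one_of_mem (show ⁅⁅fB, fA⁆, fA⁆ ∈ HRels p e i j k by simp [HRels])
      rwa [map_commutatorElement, map_commutatorElement] at this
    · have := PresentedGroup.one_of_mem (show ⁅⁅fB, fA⁆, fB⁆ ∈ HRels p e i j k by simp [HRels])
      rwa [map_commutatorElement, map_commutatorElement] at this
  rw [Subgroup.mem_center_iff]
  intro g
  have hg : g ∈ Subgroup.closure {ha p e i j k, hb p e i j k} := closure_ha_hb ▸ Subgroup.mem_top g
  refine Subgroup.mem_centralizer_singleton_iff.1 ((Subgroup.closure_le _).2 ?_ hg)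
  exact fun x hx => Subgroup.mem_centralizer_singleton_iff.2 (hcomm x hx).eq.symm

def ofHeisenberg (p e i j k : ℕ) : Heisenberg ℤ →* HGroup p e i j k :=
  lift (ha p e i j k) (hb p e i j k) commutatorElement_mem_center

lemma ofHeisenberg_surjective : Function.Surjective (ofHeisenberg p e i j k) :=
  lift_surjective closure_ha_hb

def toHeisenbergQuotient (p e i j k : ℕ) (hji : j ≤ i) (hie : i ≤ e) :
    HGroup p e i j k →* Heisenberg ℤ ⧸ relSubgroup (p ^ j) (p ^ (e - j)) (p ^ (i - j)) (p ^ k) :=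
  PresentedGroup.toGroup (f := fun β => QuotientGroup.mk (cond β ⟨1, 0, 0⟩ ⟨0, 1, 0⟩)) <| by
    have hlift : FreeGroup.lift (fun β => (QuotientGroup.mk (cond β ⟨1, 0, 0⟩ ⟨0, 1, 0⟩) :
        Heisenberg ℤ ⧸ relSubgroup (p ^ j) (p ^ (e - j)) (p ^ (i - j)) (p ^ k))) =
        (QuotientGroup.mk' _).comp (FreeGroup.lift fun β => cond β ⟨1, 0, 0⟩ ⟨0, 1, 0⟩) := by
      ext β; cases β <;> rfl
    intro r hr
    rw [hlift, MonoidHom.comp_apply, QuotientGroup.mk'_apply, QuotientGroup.eq_one_iff]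
    simp only [HRels, Set.mem_insert_iff, Set.mem_singleton_iff] at hr
    rcases hr with rfl | rfl | rfl | rfl | rfl <;>
      simp [fA, fB, commutatorElement_eq, pow_of_y_mul_x_eq_zero, mem_relSubgroup]
    · rw [← pow_add, Nat.add_sub_cancel' (hji.trans hie)]
    · exact ⟨1, by rw [← pow_add, Nat.add_sub_cancel' hji, one_mul], by simp⟩

lemma toHeisenbergQuotient_ofHeisenberg (hji : j ≤ i) (hie : i ≤ e) (t : Heisenberg ℤ) :
    toHeisenbergQuotient p e i j k hji hie (ofHeisenberg p e i j k t) = QuotientGroup.mk' _ t := by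
  conv_rhs => rw [eq_zpow_mul_zpow_mul_zpow t]
  simp only [ofHeisenberg, lift_apply, map_mul, map_zpow, map_commutatorElement,
    toHeisenbergQuotient, ha, hb, PresentedGroup.toGroup.of, cond_true, cond_false,
    QuotientGroup.mk'_apply]

theorem ker_ofHeisenberg (hji : j ≤ i) (hie : i ≤ e) :
    (ofHeisenberg p e i j k).ker = relSubgroup (p ^ j) (p ^ (e - j)) (p ^ (i - j)) (p ^ k) := by
  refine le_antisymm (fun t ht => ?_) (relSubgroup_le_ker_lift ?_ commutatorElement_pow ?_)
  · have := congrArg (toHeisenbergQuotient p e i j k hji hie) ht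
    rwa [toHeisenbergQuotient_ofHeisenberg, map_one, QuotientGroup.mk'_apply,
      QuotientGroup.eq_one_iff] at this
  · rw [pow_mul_pow_sub _ (hji.trans hie)]; exact ha_pow
  · rw [pow_mul_pow_sub _ hji]; exact hb_pow

end HGroup

section Statements

theorem statement6_general (p e i j k : ℕ) (hp : p.Prime) (hji : j ≤ i) (hie : i ≤ e) :
    Subgroup.center (HGroup p e i j k) =
      powSubgroup (HGroup p e i j k) (p ^ j) ⊔ commutator (HGroup p e i j k) ∧
    Nat.card (Subgroup.center (HGroup p e i j k)) = p ^ (e + i - j) := by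
  have : NeZero p := ⟨hp.ne_zero⟩
  have hker := HGroup.ker_ofHeisenberg (p := p) (k := k) hji hie
  refine ⟨Heisenberg.center_eq_powSubgroup_sup_commutator HGroup.ofHeisenberg_surjective hker, ?_⟩
  rw [Heisenberg.card_center HGroup.ofHeisenberg_surjective hker, ← pow_add, ← pow_add]
  congr 1
  omega

theorem statement6 (p e i j k : ℕ) (hp : p.Prime) (hodd : Odd p)
    (hk : 0 < k) (hkj : k < j) (hji : j ≤ i) (hie : i ≤ e) (he : e = i + j - k) :
    Subgroup.center (HGroup p e i j k) =
      powSubgroup (HGroup p e i j k) (p ^ j) ⊔ commutator (HGroup p e i j k) ∧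
    Nat.card (Subgroup.center (HGroup p e i j k)) = p ^ (e + i - j) :=
  statement6_general p e i j k hp hji hie

end Statements

end Beauville
end
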